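/- arXiv:2203.12470 — 8 statements merged into one kernel-verified Lean document; each statement's English description precedes it below -/
import Mathlib

section
/- Let G[X,Y] be a bipartite multigraph on finite disjoint vertex sets X and Y, and let g, f be functions assigning a natural number to each vertex with g(x) ≤ f(x) for all x ∈ X. Then G has a spanning subgraph F such that g(x) ≤ deg_F(x) ≤ f(x) for every x ∈ X and deg_F(y) ≤ f(y) for every y ∈ Y, if and only if for every A ⊆ X and every B ⊆ Y one has ∑_{y∈B} f(y) ≥ ∑_{x∈A} max{0, g(x) − e_G(x, Y∖B)}. -/
/-!
Write `excess B x = g x - e_G(x, Y ∖ B)` and `deficiency B = ∑ₓ excess B x`, so the condition reads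
`deficiency B ≤ f(B)`; necessity is double counting. For sufficiency we route one unit of demand of
some `x₀` with `g x₀ > 0` along an edge `x₀y₀` and recurse on `∑ g`. Routing along `x₀y₀` keeps the
condition unless some tight set `B ∋ y₀` has `excess B x₀ = 0`. Since `B ↦ excess B x` is
supermodular and `f` is modular, tight sets with `excess B x₀ = 0` are closed under union; the
largest one, `M`, still satisfies `g x₀ ≤ e_G(x₀, Y ∖ M)`, so a suitable `y₀` exists outside `M`.
-/

open Finset

namespace BipartiteFactor

section Deficiency

variable {X Y : Type*} [Fintype Y] [DecidableEq Y]

def excess (eG : X → Y → ℕ) (g : X → ℕ) (B : Finset Y) (x : X) : ℕ :=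
  g x - ∑ y ∈ Bᶜ, eG x y

variable {eG : X → Y → ℕ} {g : X → ℕ} in
theorem excess_add_excess_le (B C : Finset Y) (x : X) :
    excess eG g B x + excess eG g C x ≤ excess eG g (B ∪ C) x + excess eG g (B ∩ C) x := by
  have hmodular : ∑ y ∈ (B ∪ C)ᶜ, eG x y + ∑ y ∈ (B ∩ C)ᶜ, eG x y =
      ∑ y ∈ Bᶜ, eG x y + ∑ y ∈ Cᶜ, eG x y := by
    rw [compl_union, compl_inter, add_comm]
    exact sum_union_inter
  have hB : ∑ y ∈ (B ∪ C)ᶜ, eG x y ≤ ∑ y ∈ Bᶜ, eG x y :=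
    sum_le_sum_of_subset (compl_subset_compl.mpr subset_union_left)
  have hC : ∑ y ∈ (B ∪ C)ᶜ, eG x y ≤ ∑ y ∈ Cᶜ, eG x y :=
    sum_le_sum_of_subset (compl_subset_compl.mpr subset_union_right)
  unfold excess
  omega

variable [Fintype X]

def deficiency (eG : X → Y → ℕ) (g : X → ℕ) (B : Finset Y) : ℕ :=
  ∑ x, excess eG g B x

def IsTight (eG : X → Y → ℕ) (g : X → ℕ) (f : Y → ℕ) (B : Finset Y) : Prop :=
  deficiency eG g B = ∑ y ∈ B, f y

variable {eG : X → Y → ℕ} {g : X → ℕ} {f : Y → ℕ}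

theorem sum_excess_le_of_subgraph {eF : X → Y → ℕ} (hle : eF ≤ eG)
    (hX : ∀ x, g x ≤ ∑ y, eF x y) (hY : ∀ y, ∑ x, eF x y ≤ f y) (A : Finset X) (B : Finset Y) :
    ∑ x ∈ A, excess eG g B x ≤ ∑ y ∈ B, f y := by
  have hexcess : ∀ x, excess eG g B x ≤ ∑ y ∈ B, eF x y := fun x => by
    have hsplit := sum_add_sum_compl B (eF x)
    have houtside : ∑ y ∈ Bᶜ, eF x y ≤ ∑ y ∈ Bᶜ, eG x y := sum_le_sum fun y _ => hle x y
    have := hX x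
    unfold excess
    omega
  calc ∑ x ∈ A, excess eG g B x
      ≤ ∑ x, ∑ y ∈ B, eF x y :=
        (sum_le_sum fun x _ => hexcess x).trans (sum_le_sum_of_subset (subset_univ A))
    _ = ∑ y ∈ B, ∑ x, eF x y := sum_comm
    _ ≤ ∑ y ∈ B, f y := sum_le_sum fun y _ => hY y

theorem IsTight.union (hcond : ∀ B, deficiency eG g B ≤ ∑ y ∈ B, f y) {B C : Finset Y}
    (hB : IsTight eG g f B) (hC : IsTight eG g f C) :
    IsTight eG g f (B ∪ C) ∧ ∀ x,
      excess eG g (B ∪ C) x + excess eG g (B ∩ C) x = excess eG g B x + excess eG g C x := by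
  have hle : ∀ x ∈ univ,
      excess eG g B x + excess eG g C x ≤ excess eG g (B ∪ C) x + excess eG g (B ∩ C) x :=
    fun x _ => excess_add_excess_le B C x
  have hsum := sum_le_sum hle
  have hunion := hcond (B ∪ C)
  have hinter := hcond (B ∩ C)
  have hf : ∑ y ∈ B ∪ C, f y + ∑ y ∈ B ∩ C, f y = ∑ y ∈ B, f y + ∑ y ∈ C, f y := sum_union_inter
  unfold IsTight deficiency at *
  rw [sum_add_distrib, sum_add_distrib] at hsum
  refine ⟨by omega, fun x => ((sum_eq_sum_iff_of_le hle).mp ?_ x (mem_univ x)).symm⟩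
  rw [sum_add_distrib, sum_add_distrib]
  omega

theorem exists_augmenting_neighbor (hcond : ∀ B, deficiency eG g B ≤ ∑ y ∈ B, f y) {x₀ : X}
    (hx₀ : 0 < g x₀) :
    ∃ y₀, 0 < eG x₀ y₀ ∧ ∀ B, y₀ ∈ B → IsTight eG g f B → 0 < excess eG g B x₀ := by
  classical
  let blocking : Set (Finset Y) := {B | IsTight eG g f B ∧ excess eG g B x₀ = 0}
  have hclosed : SupClosed blocking := by
    rintro B ⟨hB, hB₀⟩ C ⟨hC, hC₀⟩
    obtain ⟨hBC, hexcess⟩ := hB.union hcond hC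
    change B ∪ C ∈ blocking
    exact ⟨hBC, by have := hexcess x₀; omega⟩
  have hempty : ∅ ∈ blocking := by
    have h : deficiency eG g ∅ = 0 := by simpa using hcond ∅
    exact ⟨by simp [IsTight, h], sum_eq_zero_iff.mp h x₀ (mem_univ x₀)⟩
  let M := (univ.filter (· ∈ blocking)).sup id
  have hM : M ∈ blocking :=
    hclosed.finsetSup_mem ⟨∅, by simpa using hempty⟩ fun B hB => by simpa using hB
  obtain ⟨y₀, hy₀M, hy₀⟩ : ∃ y₀ ∈ Mᶜ, 0 < eG x₀ y₀ := by
    have := hM.2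
    unfold excess at this
    exact sum_pos_iff.mp (by omega)
  refine ⟨y₀, hy₀, fun B hy₀B hB => Nat.pos_of_ne_zero fun hB₀ => mem_compl.mp hy₀M ?_⟩
  have hBM : B ≤ M := le_sup (f := id) (mem_filter.mpr ⟨mem_univ B, hB, hB₀⟩)
  exact hBM hy₀B

theorem pos_of_augmenting (hcond : ∀ B, deficiency eG g B ≤ ∑ y ∈ B, f y) {x₀ : X} {y₀ : Y}
    (hgood : ∀ B, y₀ ∈ B → IsTight eG g f B → 0 < excess eG g B x₀) : 0 < f y₀ := by
  by_contra! h
  have hf₀ : f y₀ = 0 := by omega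
  have hzero : deficiency eG g {y₀} = 0 := by simpa [hf₀] using hcond {y₀}
  have hpos := hgood {y₀} (mem_singleton_self y₀) (by simp [IsTight, hzero, hf₀])
  have : excess eG g {y₀} x₀ ≤ deficiency eG g {y₀} :=
    single_le_sum (fun x _ => Nat.zero_le _) (mem_univ x₀)
  omega

end Deficiency

section Augmentation

variable {X Y : Type*} [DecidableEq X] [DecidableEq Y]

def singleEdge (x₀ : X) (y₀ : Y) : X → Y → ℕ :=
  Pi.single x₀ (Pi.single y₀ 1)

theorem singleEdge_apply (x₀ : X) (y₀ : Y) (x : X) (y : Y) :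
    singleEdge x₀ y₀ x y = if x = x₀ ∧ y = y₀ then 1 else 0 := by
  by_cases hx : x = x₀ <;> simp [singleEdge, Pi.single_apply, hx]

theorem singleEdge_le {eG : X → Y → ℕ} {x₀ : X} {y₀ : Y} (h : 0 < eG x₀ y₀) :
    singleEdge x₀ y₀ ≤ eG := fun x y => by
  rw [singleEdge_apply]
  split_ifs with hxy
  · exact hxy.1 ▸ hxy.2 ▸ h
  · exact Nat.zero_le _

theorem sum_singleEdge_apply_left (x₀ : X) (y₀ : Y) (x : X) (s : Finset Y) :
    ∑ y ∈ s, singleEdge x₀ y₀ x y = if x = x₀ ∧ y₀ ∈ s then 1 else 0 := by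
  by_cases hx : x = x₀ <;> simp [singleEdge_apply, hx]

theorem sum_singleEdge_apply_right [Fintype X] (x₀ : X) (y₀ : Y) (y : Y) :
    ∑ x, singleEdge x₀ y₀ x y = if y = y₀ then 1 else 0 := by
  by_cases hy : y = y₀ <;> simp [singleEdge_apply, hy]

variable [Fintype Y] {eG : X → Y → ℕ} {g : X → ℕ} {x₀ : X} {y₀ : Y}

theorem excess_sub_singleEdge_of_ne {x : X} (hx : x ≠ x₀) (B : Finset Y) :
    excess (eG - singleEdge x₀ y₀) (g - Pi.single x₀ 1) B x = excess eG g B x := by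
  simp [excess, singleEdge_apply, hx]

theorem excess_sub_singleEdge_self (hy₀ : 0 < eG x₀ y₀) (B : Finset Y) :
    excess (eG - singleEdge x₀ y₀) (g - Pi.single x₀ 1) B x₀ =
      (g x₀ - 1) - (∑ y ∈ Bᶜ, eG x₀ y - if y₀ ∈ B then 0 else 1) := by
  have hsub : ∑ y ∈ Bᶜ, (eG - singleEdge x₀ y₀) x₀ y =
      ∑ y ∈ Bᶜ, eG x₀ y - ∑ y ∈ Bᶜ, singleEdge x₀ y₀ x₀ y :=
    sum_tsub_distrib _ fun y _ => singleEdge_le hy₀ x₀ y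
  rw [excess, hsub, sum_singleEdge_apply_left]
  by_cases hy₀B : y₀ ∈ B <;> simp [hy₀B]

variable [Fintype X] {f : Y → ℕ}

theorem deficiency_sub_singleEdge_le (hcond : ∀ B, deficiency eG g B ≤ ∑ y ∈ B, f y)
    (hy₀ : 0 < eG x₀ y₀) (hgood : ∀ B, y₀ ∈ B → IsTight eG g f B → 0 < excess eG g B x₀)
    (B : Finset Y) :
    deficiency (eG - singleEdge x₀ y₀) (g - Pi.single x₀ 1) B ≤
      ∑ y ∈ B, (f - Pi.single y₀ 1 : Y → ℕ) y := by
  have hle : ∀ x ∈ univ,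
      excess (eG - singleEdge x₀ y₀) (g - Pi.single x₀ 1) B x ≤ excess eG g B x := fun x _ => by
    by_cases hx : x = x₀
    · subst hx
      rw [excess_sub_singleEdge_self hy₀, excess]
      split_ifs <;> omega
    · rw [excess_sub_singleEdge_of_ne hx]
  have hf : ∑ y ∈ B, f y ≤ ∑ y ∈ B, (f - Pi.single y₀ 1 : Y → ℕ) y + if y₀ ∈ B then 1 else 0 := by
    rw [← sum_pi_single' y₀ 1 B, ← sum_add_distrib]
    exact sum_le_sum fun y _ => le_tsub_add
  by_cases hy₀B : y₀ ∈ B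
  · suffices deficiency (eG - singleEdge x₀ y₀) (g - Pi.single x₀ 1) B < ∑ y ∈ B, f y by
      rw [if_pos hy₀B] at hf
      omega
    by_cases htight : IsTight eG g f B
    · rw [← htight]
      refine sum_lt_sum hle ⟨x₀, mem_univ x₀, ?_⟩
      have := hgood B hy₀B htight
      rw [excess_sub_singleEdge_self hy₀, if_pos hy₀B]
      unfold excess at this ⊢
      omega
    · exact (sum_le_sum hle).trans_lt (lt_of_le_of_ne (hcond B) htight)
  · rw [if_neg hy₀B] at hf
    exact (sum_le_sum hle).trans ((hcond B).trans (by simpa using hf))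

theorem exists_subgraph_of_deficiency_le (eG : X → Y → ℕ) (g : X → ℕ) (f : Y → ℕ)
    (hcond : ∀ B, deficiency eG g B ≤ ∑ y ∈ B, f y) :
    ∃ eF : X → Y → ℕ, eF ≤ eG ∧ (∀ x, ∑ y, eF x y = g x) ∧ ∀ y, ∑ x, eF x y ≤ f y := by
  by_cases hg : ∀ x, g x = 0
  · exact ⟨0, fun _ _ => Nat.zero_le _, fun x => by simp [hg], fun y => by simp⟩
  obtain ⟨x₀, hx₀⟩ := not_forall.mp hg
  replace hx₀ : 0 < g x₀ := Nat.pos_of_ne_zero hx₀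
  obtain ⟨y₀, hy₀, hgood⟩ := exists_augmenting_neighbor hcond hx₀
  have hf₀ := pos_of_augmenting hcond hgood
  obtain ⟨eF, hle, hX, hY⟩ := exists_subgraph_of_deficiency_le (eG - singleEdge x₀ y₀)
    (g - Pi.single x₀ 1) (f - Pi.single y₀ 1) (deficiency_sub_singleEdge_le hcond hy₀ hgood)
  refine ⟨eF + singleEdge x₀ y₀, fun x y => ?_, fun x => ?_, fun y => ?_⟩
  · have hle' := hle x y
    have hedge : singleEdge x₀ y₀ x y ≤ eG x y := singleEdge_le hy₀ x y
    simp only [Pi.add_apply, Pi.sub_apply] at hle' ⊢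
    omega
  · have hrow := hX x
    rw [Pi.sub_apply, Pi.single_apply] at hrow
    simp only [Pi.add_apply, sum_add_distrib, sum_singleEdge_apply_left, mem_univ, and_true]
    split_ifs at hrow ⊢ with hx
    · subst hx
      omega
    · omega
  · have hcol := hY y
    rw [Pi.sub_apply, Pi.single_apply] at hcol
    simp only [Pi.add_apply, sum_add_distrib, sum_singleEdge_apply_right]
    split_ifs at hcol ⊢ with hy
    · subst hy
      omega
    · omega
termination_by ∑ x, g x
decreasing_by
  refine sum_lt_sum (fun x _ => tsub_le_self) ⟨x₀, mem_univ x₀, ?_⟩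
  simp only [Pi.sub_apply, Pi.single_eq_same]
  omega

end Augmentation

end BipartiteFactor

open BipartiteFactor in
/-- Theorem 3 (main theorem): a bipartite multigraph `G[X,Y]`, given by its edge
multiplicity function `eG : X → Y → ℕ`, has a spanning subgraph `F` with
`g(x) ≤ deg_F(x) ≤ f(x)` for `x ∈ X` and `deg_F(y) ≤ f(y)` for `y ∈ Y` iff
for all `A ⊆ X`, `B ⊆ Y` we have
`∑_{y∈B} f(y) ≥ ∑_{x∈A} max{0, g(x) − e_G(x, Y∖B)}`. -/
theorem bipartite_gf_factor_iff
    {X Y : Type*} [Fintype X] [Fintype Y] [DecidableEq X] [DecidableEq Y]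
    (eG : X → Y → ℕ) (g f : X ⊕ Y → ℕ)
    (hgf : ∀ x : X, g (Sum.inl x) ≤ f (Sum.inl x)) :
    (∃ eF : X → Y → ℕ,
      (∀ x y, eF x y ≤ eG x y) ∧
      (∀ x : X, g (Sum.inl x) ≤ ∑ y, eF x y ∧ ∑ y, eF x y ≤ f (Sum.inl x)) ∧
      (∀ y : Y, ∑ x, eF x y ≤ f (Sum.inr y)))
    ↔
    (∀ (A : Finset X) (B : Finset Y),
      ∑ x ∈ A, (g (Sum.inl x) - ∑ y ∈ Bᶜ, eG x y) ≤ ∑ y ∈ B, f (Sum.inr y)) := by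
  constructor
  · rintro ⟨eF, hle, hX, hY⟩
    exact sum_excess_le_of_subgraph (g := g ∘ Sum.inl) hle (fun x => (hX x).1) hY
  · intro hcond
    obtain ⟨eF, hle, hX, hY⟩ :=
      exists_subgraph_of_deficiency_le eG (g ∘ Sum.inl) (f ∘ Sum.inr) (hcond univ)
    exact ⟨eF, hle, fun x => ⟨(hX x).ge, (hX x).trans_le (hgf x)⟩, hY⟩
end

section
/- Let G[X,Y] be a bipartite multigraph on finite disjoint vertex sets X and Y, and let g, f assign a natural number to each vertex with g(x) ≤ f(x) for all x ∈ X. Suppose that for every A ⊆ X and every B ⊆ Y one has ∑_{y∈B} f(y) ≥ ∑_{x∈A} max{0, g(x) − e_G(x, Y∖B)}. Then G has a spanning subgraph F such that g(x) ≤ deg_F(x) ≤ f(x) for every x ∈ X and deg_F(y) ≤ f(y) for every y ∈ Y. -/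
/-!
Strong induction on the number of edges. Pick `x₀` of positive demand and an edge `x₀y₀` (one
exists by the condition for `B = ∅`). If the condition survives deleting one copy of `x₀y₀`,
recurse. Otherwise some `B₁ ∌ y₀` becomes violated. The deficiency is supermodular in `B`
(pointwise it is the convex function `t ↦ n - t` of the modular `B ↦ e(x, Bᶜ)`), and comparing
`B₁` with an arbitrary `B ∋ y₀` through `B ∪ B₁` and `B ∩ B₁` shows that the condition holds
after `x₀y₀` is put into the factor, i.e. after lowering `d x₀`, `c y₀` and `e x₀ y₀` by one.
-/

open Finset

theorem Nat.tsub_add_tsub_le_tsub_add_tsub {n a b c d : ℕ} (h : a + b = c + d) (hca : c ≤ a)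
    (hcb : c ≤ b) : n - a + (n - b) ≤ n - c + (n - d) := by
  omega

theorem sum_single_single_apply {X Y : Type*} [DecidableEq X] [DecidableEq Y] (x₀ x : X)
    (y₀ : Y) (S : Finset Y) :
    ∑ y ∈ S, (Pi.single x₀ (Pi.single y₀ 1) : X → Y → ℕ) x y =
      if y₀ ∈ S then (Pi.single x₀ 1 : X → ℕ) x else 0 := by
  rcases eq_or_ne x x₀ with rfl | hx
  · simp [sum_pi_single']
  · simp [hx]

theorem Pi.single_le_iff {ι α : Type*} [DecidableEq ι] [AddMonoid α] [PartialOrder α]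
    [CanonicallyOrderedAdd α] {i : ι} {a : α} {f : ι → α} : Pi.single i a ≤ f ↔ a ≤ f i := by
  refine ⟨fun h => by simpa using h i, fun h j => ?_⟩
  rcases eq_or_ne j i with rfl | hj
  · simpa using h
  · simp [hj]

section

variable {X Y : Type*} [Fintype X] [Fintype Y]

-- Truncated subtraction plays the role of `max {0, ·}`.
def deficiency [DecidableEq Y] (e : X → Y → ℕ) (d : X → ℕ) (B : Finset Y) : ℕ :=
  ∑ x, (d x - ∑ y ∈ Bᶜ, e x y)

def HallCondition [DecidableEq Y] (e : X → Y → ℕ) (d : X → ℕ) (c : Y → ℕ) : Prop :=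
  ∀ B : Finset Y, deficiency e d B ≤ ∑ y ∈ B, c y

def IsFactor (e : X → Y → ℕ) (d : X → ℕ) (c : Y → ℕ) (F : X → Y → ℕ) : Prop :=
  F ≤ e ∧ (∀ x, ∑ y, F x y = d x) ∧ ∀ y, ∑ x, F x y ≤ c y

theorem IsFactor.mono {e e' : X → Y → ℕ} {d : X → ℕ} {c : Y → ℕ} {F : X → Y → ℕ}
    (hF : IsFactor e d c F) (he : e ≤ e') : IsFactor e' d c F :=
  ⟨hF.1.trans he, hF.2⟩

theorem IsFactor.add_single [DecidableEq X] [DecidableEq Y] {e : X → Y → ℕ} {d : X → ℕ}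
    {c : Y → ℕ} {F : X → Y → ℕ} (hF : IsFactor e d c F) (x₀ : X) (y₀ : Y) :
    IsFactor (e + Pi.single x₀ (Pi.single y₀ 1)) (d + Pi.single x₀ 1) (c + Pi.single y₀ 1)
      (F + Pi.single x₀ (Pi.single y₀ 1)) := by
  obtain ⟨hFe, hrow, hcol⟩ := hF
  refine ⟨add_le_add_left hFe _, fun x => ?_, fun y => ?_⟩
  · simp [sum_add_distrib, hrow, sum_single_single_apply]
  · have hcol₀ : ∑ x, (Pi.single x₀ (Pi.single y₀ 1) : X → Y → ℕ) x y =
        (Pi.single y₀ 1 : Y → ℕ) y := by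
      rw [← Finset.sum_apply, Fintype.sum_pi_single']
    simp only [Pi.add_apply, sum_add_distrib, hcol₀]
    exact Nat.add_le_add_right (hcol y) _

theorem deficiency_tsub_add_deficiency_le [DecidableEq Y] (e : X → Y → ℕ) (d k : X → ℕ)
    (B₁ B₂ : Finset Y) :
    deficiency e (d - k) B₁ + deficiency e d B₂ ≤
      deficiency e d (B₁ ∪ B₂) + deficiency e (d - k) (B₁ ∩ B₂) := by
  simp only [deficiency, ← sum_add_distrib, Pi.sub_apply, tsub_tsub]
  refine sum_le_sum fun x _ => Nat.tsub_add_tsub_le_tsub_add_tsub ?_ ?_ ?_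
  · have := sum_union_inter (s₁ := B₁ᶜ) (s₂ := B₂ᶜ) (f := e x)
    rw [compl_union, compl_inter]
    omega
  · exact le_add_left (sum_le_sum_of_subset (by simp))
  · exact sum_le_sum_of_subset (by simp)

theorem deficiency_add_single [DecidableEq X] [DecidableEq Y] (e : X → Y → ℕ) (d : X → ℕ)
    (x₀ : X) (y₀ : Y) (B : Finset Y) :
    deficiency (e + Pi.single x₀ (Pi.single y₀ 1)) d B =
      if y₀ ∈ B then deficiency e d B else deficiency e (d - Pi.single x₀ 1) B := by
  split_ifs with hB <;>
  · refine sum_congr rfl fun x _ => ?_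
    simp [sum_add_distrib, sum_single_single_apply, hB, tsub_tsub, add_comm]

theorem HallCondition.exists_ne_zero [DecidableEq Y] {e : X → Y → ℕ} {d : X → ℕ} {c : Y → ℕ}
    (h : HallCondition e d c) {x₀ : X} (hx₀ : d x₀ ≠ 0) : ∃ y₀, e x₀ y₀ ≠ 0 := by
  have hdeg : d x₀ ≤ ∑ y, e x₀ y := by
    have h₀ := h ∅
    simp only [deficiency, compl_empty, sum_empty, nonpos_iff_eq_zero, sum_eq_zero_iff,
      mem_univ, true_imp_iff, tsub_eq_zero_iff_le] at h₀
    exact h₀ x₀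
  obtain ⟨y₀, -, hy₀⟩ := exists_ne_zero_of_sum_ne_zero (by omega : ∑ y, e x₀ y ≠ 0)
  exact ⟨y₀, hy₀⟩

theorem HallCondition.tsub_single_of_not_hallCondition [DecidableEq X] [DecidableEq Y] {e : X → Y → ℕ} {d : X → ℕ}
    {c : Y → ℕ} {x₀ : X} {y₀ : Y} (h : HallCondition (e + Pi.single x₀ (Pi.single y₀ 1)) d c)
    (hdel : ¬ HallCondition e d c) :
    1 ≤ c y₀ ∧ HallCondition e (d - Pi.single x₀ 1) (c - Pi.single y₀ 1) := by
  obtain ⟨B₁, hB₁⟩ : ∃ B₁, ∑ y ∈ B₁, c y < deficiency e d B₁ := by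
    simpa [HallCondition] using hdel
  have hy₀B₁ : y₀ ∉ B₁ := fun hy => hB₁.not_ge (by simpa [deficiency_add_single, hy] using h B₁)
  have key : ∀ B, deficiency e (d - Pi.single x₀ 1) B + ∑ y ∈ B, Pi.single y₀ 1 y ≤
      ∑ y ∈ B, c y := by
    intro B
    by_cases hB : y₀ ∈ B
    · have hexch := deficiency_tsub_add_deficiency_le e d (Pi.single x₀ 1) B B₁
      have hunion := h (B ∪ B₁)
      have hinter := h (B ∩ B₁)
      rw [deficiency_add_single, if_pos (mem_union_left _ hB)] at hunion
      rw [deficiency_add_single, if_neg (fun hy => hy₀B₁ (mem_inter.1 hy).2)] at hinter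
      have hmod := sum_union_inter (s₁ := B) (s₂ := B₁) (f := c)
      rw [sum_pi_single', if_pos hB]
      omega
    · simpa [deficiency_add_single, hB, sum_pi_single'] using h B
  have hc : 1 ≤ c y₀ := by
    have hy₀ := key {y₀}
    rw [sum_singleton, sum_singleton, Pi.single_eq_same] at hy₀
    omega
  refine ⟨hc, fun B => ?_⟩
  simp only [Pi.sub_apply]
  rw [sum_tsub_distrib _ fun y _ => Pi.single_le_iff.2 hc y]
  exact Nat.le_sub_of_add_le (key B)

theorem HallCondition.exists_isFactor [DecidableEq Y] {e : X → Y → ℕ} {d : X → ℕ} {c : Y → ℕ}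
    (h : HallCondition e d c) : ∃ F, IsFactor e d c F := by
  classical
  induction hn : ∑ x, ∑ y, e x y using Nat.strong_induction_on generalizing e d c with
  | _ n ih =>
    by_cases hd : d = 0
    · subst hd
      exact ⟨0, fun _ _ => Nat.zero_le _, fun x => by simp, fun y => by simp⟩
    obtain ⟨x₀, hx₀⟩ : ∃ x₀, d x₀ ≠ 0 := by simpa [funext_iff] using hd
    obtain ⟨y₀, hy₀⟩ := h.exists_ne_zero hx₀
    obtain ⟨e, rfl⟩ : ∃ e', e = e' + Pi.single x₀ (Pi.single y₀ 1) :=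
      ⟨e - Pi.single x₀ (Pi.single y₀ 1), (tsub_add_cancel_of_le
        (Pi.single_le_iff.2 (Pi.single_le_iff.2 (Nat.one_le_iff_ne_zero.2 hy₀)))).symm⟩
    have hlt : ∑ x, ∑ y, e x y < n := by
      simp [← hn, sum_add_distrib, sum_single_single_apply]
    by_cases hdel : HallCondition e d c
    · obtain ⟨F, hF⟩ := ih _ hlt hdel rfl
      exact ⟨F, hF.mono le_self_add⟩
    obtain ⟨hc, hred⟩ := h.tsub_single_of_not_hallCondition hdel
    obtain ⟨F, hF⟩ := ih _ hlt hred rfl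
    have hF' := hF.add_single x₀ y₀
    rw [tsub_add_cancel_of_le (Pi.single_le_iff.2 (Nat.one_le_iff_ne_zero.2 hx₀)),
      tsub_add_cancel_of_le (Pi.single_le_iff.2 hc)] at hF'
    exact ⟨_, hF'⟩

end

theorem bipartite_gf_factor_sufficiency_general
    {X Y : Type*} [Fintype X] [Fintype Y] [DecidableEq Y]
    (eG : X → Y → ℕ) (g f : X ⊕ Y → ℕ)
    (hgf : ∀ x : X, g (Sum.inl x) ≤ f (Sum.inl x))
    (hcond : ∀ (A : Finset X) (B : Finset Y),
      ∑ x ∈ A, (g (Sum.inl x) - ∑ y ∈ Bᶜ, eG x y) ≤ ∑ y ∈ B, f (Sum.inr y)) :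
    ∃ eF : X → Y → ℕ,
      (∀ x y, eF x y ≤ eG x y) ∧
      (∀ x : X, g (Sum.inl x) ≤ ∑ y, eF x y ∧ ∑ y, eF x y ≤ f (Sum.inl x)) ∧
      (∀ y : Y, ∑ x, eF x y ≤ f (Sum.inr y)) := by
  have hall : HallCondition eG (fun x => g (Sum.inl x)) (fun y => f (Sum.inr y)) :=
    fun B => hcond univ B
  obtain ⟨F, hFe, hrow, hcol⟩ := hall.exists_isFactor
  exact ⟨F, hFe, fun x => ⟨(hrow x).ge, (hrow x).le.trans (hgf x)⟩, hcol⟩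

/-- Sufficiency direction: if for all `A ⊆ X`, `B ⊆ Y` we have
`∑_{y∈B} f(y) ≥ ∑_{x∈A} max{0, g(x) − e_G(x, Y∖B)}`, then the bipartite
multigraph `G[X,Y]` (given by `eG`) has a spanning subgraph `F` with
`g(x) ≤ deg_F(x) ≤ f(x)` for `x ∈ X` and `deg_F(y) ≤ f(y)` for `y ∈ Y`. -/
theorem bipartite_gf_factor_sufficiency
    {X Y : Type*} [Fintype X] [Fintype Y] [DecidableEq X] [DecidableEq Y]
    (eG : X → Y → ℕ) (g f : X ⊕ Y → ℕ)
    (hgf : ∀ x : X, g (Sum.inl x) ≤ f (Sum.inl x))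
    (hcond : ∀ (A : Finset X) (B : Finset Y),
      ∑ x ∈ A, (g (Sum.inl x) - ∑ y ∈ Bᶜ, eG x y) ≤ ∑ y ∈ B, f (Sum.inr y)) :
    ∃ eF : X → Y → ℕ,
      (∀ x y, eF x y ≤ eG x y) ∧
      (∀ x : X, g (Sum.inl x) ≤ ∑ y, eF x y ∧ ∑ y, eF x y ≤ f (Sum.inl x)) ∧
      (∀ y : Y, ∑ x, eF x y ≤ f (Sum.inr y)) :=
  bipartite_gf_factor_sufficiency_general eG g f hgf hcond
end

section
/- Let m ≥ 1 be a natural number and let G[X,Y] be a bipartite multigraph on finite disjoint vertex sets X and Y in which every edge has multiplicity at least m (i.e., for all x ∈ X, y ∈ Y, either e_G(x,y) = 0 or e_G(x,y) ≥ m). Let g, f assign natural numbers to vertices with g(x) ≤ f(x) for all x ∈ X and f(y) ≤ m for all y ∈ Y. Then G has a spanning subgraph F such that g(x) ≤ deg_F(x) ≤ f(x) for every x ∈ X and deg_F(y) ≤ f(y) for every y ∈ Y, if and only if for every S ⊆ X one has ∑_{y∈N_G(S)} f(y) ≥ ∑_{x∈S} g(x). -/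
/-- Corollary 4: a bipartite multigraph `G[X,Y]` in which every edge has
multiplicity at least `m ≥ 1` has a spanning subgraph `F` with
`g(x) ≤ deg_F(x) ≤ f(x)` for `x ∈ X` and `deg_F(y) ≤ f(y)` for `y ∈ Y`
(where `f(y) ≤ m` on `Y`) iff `∑_{y∈N_G(S)} f(y) ≥ ∑_{x∈S} g(x)` for all `S ⊆ X`. -/
theorem bipartite_gf_factor_hall_iff
    {X Y : Type*} [Fintype X] [Fintype Y] [DecidableEq X] [DecidableEq Y]
    (m : ℕ) (hm : 1 ≤ m) (eG : X → Y → ℕ)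
    (hmult : ∀ x y, eG x y = 0 ∨ m ≤ eG x y)
    (g f : X ⊕ Y → ℕ)
    (hgf : ∀ x : X, g (Sum.inl x) ≤ f (Sum.inl x))
    (hfm : ∀ y : Y, f (Sum.inr y) ≤ m) :
    (∃ eF : X → Y → ℕ,
      (∀ x y, eF x y ≤ eG x y) ∧
      (∀ x : X, g (Sum.inl x) ≤ ∑ y, eF x y ∧ ∑ y, eF x y ≤ f (Sum.inl x)) ∧
      (∀ y : Y, ∑ x, eF x y ≤ f (Sum.inr y)))
    ↔
    (∀ S : Finset X,
      ∑ x ∈ S, g (Sum.inl x) ≤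
        ∑ y ∈ Finset.univ.filter (fun y : Y => ∃ x ∈ S, 0 < eG x y),
          f (Sum.inr y)) := by
  classical
  constructor
  · rintro ⟨eF, hle, hdeg, hcol⟩ S
    calc ∑ x ∈ S, g (Sum.inl x) ≤ ∑ x ∈ S, ∑ y, eF x y :=
          Finset.sum_le_sum fun x _ => (hdeg x).1
      _ = ∑ y, ∑ x ∈ S, eF x y := Finset.sum_comm
      _ = ∑ y ∈ Finset.univ.filter (fun y : Y => ∃ x ∈ S, 0 < eG x y),
            ∑ x ∈ S, eF x y := by
          refine (Finset.sum_subset (Finset.filter_subset _ _) ?_).symm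
          intro y _ hy
          refine Finset.sum_eq_zero fun x hx => ?_
          have h0 : eG x y = 0 := by
            by_contra h
            exact hy (Finset.mem_filter.mpr
              ⟨Finset.mem_univ _, ⟨x, hx, Nat.pos_of_ne_zero h⟩⟩)
          have := hle x y
          omega
      _ ≤ ∑ y ∈ Finset.univ.filter (fun y : Y => ∃ x ∈ S, 0 < eG x y),
            f (Sum.inr y) := by
          refine Finset.sum_le_sum fun y _ => ?_
          calc ∑ x ∈ S, eF x y ≤ ∑ x, eF x y :=
                Finset.sum_le_sum_of_subset (Finset.subset_univ S)
            _ ≤ f (Sum.inr y) := hcol y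
  · intro hS
    set t : (Σ x : X, Fin (g (Sum.inl x))) → Finset (Σ y : Y, Fin (f (Sum.inr y))) :=
      fun i => Finset.univ.filter (fun p => 0 < eG i.1 p.1) with ht
    have hall : ∀ s : Finset (Σ x : X, Fin (g (Sum.inl x))),
        s.card ≤ (s.biUnion t).card := by
      intro s
      set S := s.image Sigma.fst with hSdef
      have h1 : s.card ≤ ∑ x ∈ S, g (Sum.inl x) := by
        have hsub : s ⊆ S.sigma (fun _ => Finset.univ) := by
          intro i hi
          simp only [Finset.mem_sigma, Finset.mem_univ, and_true, hSdef]
          exact Finset.mem_image_of_mem _ hi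
        calc s.card ≤ (S.sigma fun _ => Finset.univ).card := Finset.card_le_card hsub
          _ = ∑ x ∈ S, g (Sum.inl x) := by simp [Finset.card_sigma]
      have h2 : ∑ y ∈ Finset.univ.filter (fun y : Y => ∃ x ∈ S, 0 < eG x y),
          f (Sum.inr y) ≤ (s.biUnion t).card := by
        have hsub : ((Finset.univ.filter (fun y : Y => ∃ x ∈ S, 0 < eG x y)).sigma
            (fun _ => Finset.univ)) ⊆ s.biUnion t := by
          intro p hp
          simp only [Finset.mem_sigma, Finset.mem_filter, Finset.mem_univ, true_and,
            and_true] at hp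
          obtain ⟨x, hxS, hx⟩ := hp
          obtain ⟨i, hi, rfl⟩ := Finset.mem_image.mp hxS
          exact Finset.mem_biUnion.mpr ⟨i, hi, by simp [ht, hx]⟩
        calc ∑ y ∈ Finset.univ.filter (fun y : Y => ∃ x ∈ S, 0 < eG x y), f (Sum.inr y)
            = ((Finset.univ.filter (fun y : Y => ∃ x ∈ S, 0 < eG x y)).sigma
                (fun _ => (Finset.univ : Finset (Fin (f (Sum.inr _)))))).card := by
              simp [Finset.card_sigma]
          _ ≤ (s.biUnion t).card := Finset.card_le_card hsub
      exact h1.trans ((hS S).trans h2)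
    obtain ⟨F, hFinj, hFt⟩ := (Finset.all_card_le_biUnion_card_iff_exists_injective t).mp hall
    have hFpos : ∀ i, 0 < eG i.1 (F i).1 := by
      intro i
      have := hFt i
      simpa [ht] using this
    refine ⟨fun x y => (Finset.univ.filter (fun i => i.1 = x ∧ (F i).1 = y)).card,
      ?_, ?_, ?_⟩
    · -- eF ≤ eG
      intro x y
      rcases hmult x y with h0 | hmle
      · have : (Finset.univ.filter
            (fun i : Σ x : X, Fin (g (Sum.inl x)) => i.1 = x ∧ (F i).1 = y)) = ∅ := by
          refine Finset.filter_eq_empty_iff.mpr fun i _ => ?_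
          rintro ⟨rfl, hy⟩
          have := hFpos i
          rw [hy, h0] at this
          exact absurd this (lt_irrefl 0)
        simp [this]
      · have hsub : (Finset.univ.filter
            (fun i : Σ x : X, Fin (g (Sum.inl x)) => i.1 = x ∧ (F i).1 = y)) ⊆
            Finset.univ.filter (fun i => (F i).1 = y) := by
          intro i hi
          simp only [Finset.mem_filter, Finset.mem_univ, true_and] at hi ⊢
          exact hi.2
        have hfy : (Finset.univ.filter
            (fun i : Σ x : X, Fin (g (Sum.inl x)) => (F i).1 = y)).card ≤ f (Sum.inr y) := by
          have hmap := Finset.card_le_card_of_injOn (f := F)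
            (s := Finset.univ.filter
              (fun i : Σ x : X, Fin (g (Sum.inl x)) => (F i).1 = y))
            (t := ({y} : Finset Y).sigma (fun _ => Finset.univ))
            (fun i hi => by
              simp only [Finset.mem_coe, Finset.mem_filter, Finset.mem_univ, true_and] at hi
              exact Finset.mem_coe.mpr (Finset.mem_sigma.mpr ⟨by simp [hi], Finset.mem_univ _⟩))
            (fun a _ b _ h => hFinj h)
          calc _ ≤ (({y} : Finset Y).sigma
              (fun _ => (Finset.univ : Finset (Fin (f (Sum.inr _)))))).card := hmap
            _ = f (Sum.inr y) := by simp [Finset.card_sigma]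
        calc _ ≤ _ := Finset.card_le_card hsub
          _ ≤ f (Sum.inr y) := hfy
          _ ≤ m := hfm y
          _ ≤ eG x y := hmle
    · -- row sums
      intro x
      have hrow : ∑ y, (Finset.univ.filter
          (fun i : Σ x : X, Fin (g (Sum.inl x)) => i.1 = x ∧ (F i).1 = y)).card
          = g (Sum.inl x) := by
        have h1 : ∑ y, (Finset.univ.filter
            (fun i : Σ x : X, Fin (g (Sum.inl x)) => i.1 = x ∧ (F i).1 = y)).card
            = (Finset.univ.filter
              (fun i : Σ x : X, Fin (g (Sum.inl x)) => i.1 = x)).card := by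
          rw [Finset.card_eq_sum_card_fiberwise
            (f := fun i => (F i).1) (t := Finset.univ) (fun i _ => Finset.mem_univ _)]
          refine Finset.sum_congr rfl fun y _ => ?_
          congr 1
          ext i
          simp only [Finset.mem_filter, Finset.mem_univ, true_and, and_comm]
        rw [h1]
        have h2 : (Finset.univ.filter
            (fun i : Σ x : X, Fin (g (Sum.inl x)) => i.1 = x))
            = ({x} : Finset X).sigma (fun _ => Finset.univ) := by
          ext i
          simp [Finset.mem_sigma]
        rw [h2]
        simp [Finset.card_sigma]
      rw [hrow]
      exact ⟨le_refl _, hgf x⟩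
    · -- column sums
      intro y
      have h1 : ∑ x, (Finset.univ.filter
          (fun i : Σ x : X, Fin (g (Sum.inl x)) => i.1 = x ∧ (F i).1 = y)).card
          = (Finset.univ.filter
            (fun i : Σ x : X, Fin (g (Sum.inl x)) => (F i).1 = y)).card := by
        rw [Finset.card_eq_sum_card_fiberwise
          (f := fun i => i.1) (t := Finset.univ) (fun i _ => Finset.mem_univ _)]
        refine Finset.sum_congr rfl fun x _ => ?_
        congr 1
        ext i
        simp only [Finset.mem_filter, Finset.mem_univ, true_and]
        tauto
      rw [h1]
      have hmap := Finset.card_le_card_of_injOn (f := F)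
        (s := Finset.univ.filter
          (fun i : Σ x : X, Fin (g (Sum.inl x)) => (F i).1 = y))
        (t := ({y} : Finset Y).sigma (fun _ => Finset.univ))
        (fun i hi => by
          simp only [Finset.mem_coe, Finset.mem_filter, Finset.mem_univ, true_and] at hi
          exact Finset.mem_coe.mpr (Finset.mem_sigma.mpr ⟨by simp [hi], Finset.mem_univ _⟩))
        (fun a _ b _ h => hFinj h)
      calc _ ≤ (({y} : Finset Y).sigma
          (fun _ => (Finset.univ : Finset (Fin (f (Sum.inr _)))))).card := hmap
        _ = f (Sum.inr y) := by simp [Finset.card_sigma]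
end

section
/- Let m ≥ 1 be a natural number and let G[X,Y] be a bipartite multigraph on finite disjoint vertex sets X and Y in which every edge has multiplicity at least m (i.e., for all x ∈ X, y ∈ Y, either e_G(x,y) = 0 or e_G(x,y) ≥ m). Let g assign natural numbers to vertices of X and f assign natural numbers to all vertices with f(y) ≤ m for all y ∈ Y. If ∑_{y∈N_G(S)} f(y) ≥ ∑_{x∈S} g(x) for every S ⊆ X, then for every A ⊆ X and every B ⊆ Y one has ∑_{y∈B} f(y) ≥ ∑_{x∈A} max{0, g(x) − e_G(x, Y∖B)}. -/
/-! Apply the Hall condition to the vertices `S ⊆ A` with `g x > e_G(x, Y∖B)`. Their neighbourhood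
splits into a part inside `B`, of weight at most `f(B)`, and a part outside `B`, where every vertex
`y` has an edge from `S` of multiplicity at least `m ≥ f(y)`; so `g(S) ≤ f(B) + e_G(S, Y∖B)`, which
rearranges to the claim. -/

open Finset

section Canonical

variable {ι κ M : Type*} [AddCommMonoid M] [PartialOrder M] [CanonicallyOrderedAdd M]
  [IsOrderedAddMonoid M]

theorem Finset.sum_le_sum_sum_of_forall_exists_le {s : Finset ι} {t : Finset κ}
    (w : ι → κ → M) (f : κ → M) (h : ∀ y ∈ t, ∃ x ∈ s, f y ≤ w x y) :
    ∑ y ∈ t, f y ≤ ∑ x ∈ s, ∑ y ∈ t, w x y := by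
  rw [sum_comm]
  refine sum_le_sum fun y hy => ?_
  obtain ⟨x, hx, hle⟩ := h y hy
  exact hle.trans (single_le_sum (f := (w · y)) (fun _ _ => zero_le) hx)

theorem Finset.sum_le_sum_add_sum_sdiff [DecidableEq κ] (s t : Finset κ) (f : κ → M) :
    ∑ y ∈ s, f y ≤ ∑ y ∈ t, f y + ∑ y ∈ s \ t, f y := by
  rw [← sum_inter_add_sum_sdiff s t]
  gcongr
  exact inter_subset_right

end Canonical

theorem Finset.sum_tsub_le_of_forall_subset {ι M : Type*} [AddCommMonoid M] [LinearOrder M]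
    [CanonicallyOrderedAdd M] [Sub M] [OrderedSub M] [AddLeftReflectLE M]
    {s : Finset ι} {g c : ι → M} {a : M}
    (h : ∀ t ⊆ s, ∑ x ∈ t, g x ≤ a + ∑ x ∈ t, c x) :
    ∑ x ∈ s, (g x - c x) ≤ a := by
  classical
  set t := s.filter fun x => c x < g x
  have hpos : ∑ x ∈ s, (g x - c x) = ∑ x ∈ t, (g x - c x) :=
    (sum_filter_of_ne fun x _ hne => lt_of_not_ge fun hle => hne (tsub_eq_zero_of_le hle)).symm
  rw [hpos, sum_tsub_distrib t fun x hx => (mem_filter.1 hx).2.le, tsub_le_iff_right]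
  exact h t (filter_subset _ s)

theorem hall_condition_implies_gf_condition_general
    {X Y : Type*} [Fintype Y] [DecidableEq Y]
    (m : ℕ) (eG : X → Y → ℕ)
    (hmult : ∀ x y, eG x y = 0 ∨ m ≤ eG x y)
    (g : X → ℕ) (f : X ⊕ Y → ℕ)
    (hfm : ∀ y : Y, f (Sum.inr y) ≤ m)
    (hhall : ∀ S : Finset X,
      ∑ x ∈ S, g x ≤
        ∑ y ∈ Finset.univ.filter (fun y : Y => ∃ x ∈ S, 0 < eG x y),
          f (Sum.inr y)) :
    ∀ (A : Finset X) (B : Finset Y),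
      ∑ x ∈ A, (g x - ∑ y ∈ Bᶜ, eG x y) ≤ ∑ y ∈ B, f (Sum.inr y) := by
  have hedge (x : X) (y : Y) (hxy : 0 < eG x y) : f (Sum.inr y) ≤ eG x y :=
    (hfm y).trans ((hmult x y).resolve_left hxy.ne')
  intro A B
  refine sum_tsub_le_of_forall_subset fun S _ => ?_
  set N := univ.filter fun y : Y => ∃ x ∈ S, 0 < eG x y
  have hN : ∀ y ∈ N \ B, ∃ x ∈ S, f (Sum.inr y) ≤ eG x y := fun y hy => by
    obtain ⟨x, hx, hxy⟩ := (mem_filter.1 (mem_sdiff.1 hy).1).2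
    exact ⟨x, hx, hedge x y hxy⟩
  calc ∑ x ∈ S, g x ≤ ∑ y ∈ N, f (Sum.inr y) := hhall S
    _ ≤ ∑ y ∈ B, f (Sum.inr y) + ∑ y ∈ N \ B, f (Sum.inr y) := sum_le_sum_add_sum_sdiff _ _ _
    _ ≤ ∑ y ∈ B, f (Sum.inr y) + ∑ x ∈ S, ∑ y ∈ N \ B, eG x y := by
      gcongr; exact sum_le_sum_sum_of_forall_exists_le eG _ hN
    _ ≤ ∑ y ∈ B, f (Sum.inr y) + ∑ x ∈ S, ∑ y ∈ Bᶜ, eG x y := by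
      gcongr; exact fun y hy => mem_compl.2 (mem_sdiff.1 hy).2

/-- If the Hall-type condition `∑_{y∈N_G(S)} f(y) ≥ ∑_{x∈S} g(x)` holds for all
`S ⊆ X` in a bipartite multigraph whose edge multiplicities are all `0` or `≥ m`,
and `f(y) ≤ m` on `Y`, then for all `A ⊆ X`, `B ⊆ Y` we have
`∑_{y∈B} f(y) ≥ ∑_{x∈A} max{0, g(x) − e_G(x, Y∖B)}`. -/
theorem hall_condition_implies_gf_condition
    {X Y : Type*} [Fintype X] [Fintype Y] [DecidableEq X] [DecidableEq Y]
    (m : ℕ) (hm : 1 ≤ m) (eG : X → Y → ℕ)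
    (hmult : ∀ x y, eG x y = 0 ∨ m ≤ eG x y)
    (g : X → ℕ) (f : X ⊕ Y → ℕ)
    (hfm : ∀ y : Y, f (Sum.inr y) ≤ m)
    (hhall : ∀ S : Finset X,
      ∑ x ∈ S, g x ≤
        ∑ y ∈ Finset.univ.filter (fun y : Y => ∃ x ∈ S, 0 < eG x y),
          f (Sum.inr y)) :
    ∀ (A : Finset X) (B : Finset Y),
      ∑ x ∈ A, (g x - ∑ y ∈ Bᶜ, eG x y) ≤ ∑ y ∈ B, f (Sum.inr y) :=
  hall_condition_implies_gf_condition_general m eG hmult g f hfm hhall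
end

section
/- Let G be a bipartite simple graph with parts X and Y (both finite), and let g, f assign natural numbers to vertices with g(x) ≤ f(x) for all x ∈ X and f(y) ≤ 1 for all y ∈ Y. Then G has a spanning subgraph F such that g(x) ≤ deg_F(x) ≤ f(x) for every x ∈ X and deg_F(y) ≤ f(y) for every y ∈ Y, if and only if for every S ⊆ X one has ∑_{y∈N_G(S)} f(y) ≥ ∑_{x∈S} g(x). -/
open Finset

/-- Case `m = 1` of Corollary 4 (a simple-graph version): a bipartite simple
graph `G` with parts `X`, `Y` has a spanning subgraph `F` with
`g(x) ≤ deg_F(x) ≤ f(x)` for `x ∈ X` and `deg_F(y) ≤ f(y)` for `y ∈ Y`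
(where `f(y) ≤ 1` on `Y`) iff `∑_{y∈N_G(S)} f(y) ≥ ∑_{x∈S} g(x)` for all `S ⊆ X`. -/
theorem bipartite_simple_gf_factor_hall_iff
    {V : Type*} [Fintype V] [DecidableEq V]
    (G : SimpleGraph V) [DecidableRel G.Adj]
    (X Y : Finset V) (hdisj : Disjoint X Y) (hcover : X ∪ Y = Finset.univ)
    (hbip : ∀ ⦃u v : V⦄, G.Adj u v → (u ∈ X ∧ v ∈ Y) ∨ (u ∈ Y ∧ v ∈ X))
    (g f : V → ℕ)
    (hgf : ∀ x ∈ X, g x ≤ f x)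
    (hf1 : ∀ y ∈ Y, f y ≤ 1) :
    (∃ F : SimpleGraph V, F ≤ G ∧
      (∀ x ∈ X, g x ≤ (F.neighborSet x).ncard ∧ (F.neighborSet x).ncard ≤ f x) ∧
      (∀ y ∈ Y, (F.neighborSet y).ncard ≤ f y))
    ↔
    (∀ S ⊆ X, ∑ x ∈ S, g x ≤
      ∑ y ∈ Y.filter (fun y => ∃ x ∈ S, G.Adj x y), f y) := by
  classical
  constructor
  · rintro ⟨F, hFG, hX, hY⟩ S hS
    -- neighbors (in F) of a vertex of X lie in Y
    have hnbr : ∀ x ∈ X, ∀ v, F.Adj x v → v ∈ Y := by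
      intro x hx v hv
      rcases hbip (hFG hv) with ⟨_, h⟩ | ⟨h, _⟩
      · exact h
      · exact absurd hx (Finset.disjoint_left.mp hdisj.symm h)
    have hdegX : ∀ x ∈ X, (F.neighborSet x).ncard = (Y.filter (F.Adj x)).card := by
      intro x hx
      have : F.neighborSet x = ↑(Y.filter (F.Adj x)) := by
        ext v
        simp only [SimpleGraph.mem_neighborSet, Finset.coe_filter, Set.mem_setOf_eq,
          Finset.mem_filter]
        exact ⟨fun h => ⟨hnbr x hx v h, h⟩, fun h => h.2⟩
      rw [this, Set.ncard_coe_finset]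
    have h1 : ∑ x ∈ S, g x ≤ ∑ x ∈ S, (Y.filter (F.Adj x)).card := by
      refine Finset.sum_le_sum fun x hx => ?_
      have := (hX x (hS hx)).1
      rwa [hdegX x (hS hx)] at this
    have h2 : ∑ x ∈ S, (Y.filter (F.Adj x)).card
        = ∑ y ∈ Y, (S.filter (fun x => F.Adj x y)).card := by
      simp only [Finset.card_filter]
      rw [Finset.sum_comm]
    have h3 : ∑ y ∈ Y, (S.filter (fun x => F.Adj x y)).card
        ≤ ∑ y ∈ Y.filter (fun y => ∃ x ∈ S, G.Adj x y), f y := by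
      rw [Finset.sum_filter]
      refine Finset.sum_le_sum fun y hy => ?_
      by_cases hP : ∃ x ∈ S, G.Adj x y
      · rw [if_pos hP]
        have hle : (S.filter (fun x => F.Adj x y)).card ≤ (F.neighborSet y).ncard := by
          have : ↑(S.filter (fun x => F.Adj x y)) ⊆ F.neighborSet y := by
            intro v hv
            simp only [Finset.coe_filter, Set.mem_setOf_eq] at hv
            exact (hv.2).symm
          calc (S.filter (fun x => F.Adj x y)).card
              = (↑(S.filter (fun x => F.Adj x y)) : Set V).ncard := by
                rw [Set.ncard_coe_finset]
            _ ≤ (F.neighborSet y).ncard := Set.ncard_le_ncard this (Set.toFinite _)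
        exact hle.trans (hY y hy)
      · rw [if_neg hP]
        simp only [Nat.le_zero, Finset.card_eq_zero, Finset.filter_eq_empty_iff]
        intro x hx hadj
        exact hP ⟨x, hx, hFG hadj⟩
    omega
  · intro hall
    set g' : V → ℕ := fun x => if x ∈ X then g x else 0 with hg'
    set t : (Σ x : V, Fin (g' x)) → Finset V :=
      fun p => Y.filter (fun y => G.Adj p.1 y ∧ f y = 1) with ht
    -- Hall's condition for the blown-up family
    have hhall : ∀ s : Finset (Σ x : V, Fin (g' x)), s.card ≤ (s.biUnion t).card := by
      intro s
      set S : Finset V := s.image Sigma.fst with hSdef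
      have hSX : S ⊆ X := by
        intro x hx
        rw [hSdef, Finset.mem_image] at hx
        obtain ⟨p, _, rfl⟩ := hx
        by_contra hxX
        have : g' p.1 = 0 := by simp [hg', hxX]
        exact absurd (p.2.2) (by omega)
      have hcard1 : s.card ≤ ∑ x ∈ S, g x := by
        have hsub : s ⊆ S.sigma (fun x => (Finset.univ : Finset (Fin (g' x)))) := by
          intro p hp
          rw [Finset.mem_sigma]
          exact ⟨Finset.mem_image_of_mem _ hp, Finset.mem_univ _⟩
        calc s.card ≤ (S.sigma (fun x => (Finset.univ : Finset (Fin (g' x))))).card :=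
              Finset.card_le_card hsub
          _ = ∑ x ∈ S, g' x := by rw [Finset.card_sigma]; simp
          _ = ∑ x ∈ S, g x := Finset.sum_congr rfl fun x hx => by
              simp [hg', hSX hx]
      have hbi : s.biUnion t = Y.filter (fun y => (∃ x ∈ S, G.Adj x y) ∧ f y = 1) := by
        ext y
        simp only [Finset.mem_biUnion, ht, Finset.mem_filter]
        constructor
        · rintro ⟨p, hp, hy, hadj, hfy⟩
          exact ⟨hy, ⟨p.1, Finset.mem_image_of_mem _ hp, hadj⟩, hfy⟩
        · rintro ⟨hy, ⟨x, hxS, hadj⟩, hfy⟩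
          rw [hSdef, Finset.mem_image] at hxS
          obtain ⟨p, hp, rfl⟩ := hxS
          exact ⟨p, hp, hy, hadj, hfy⟩
      have hcard2 : ∑ y ∈ Y.filter (fun y => ∃ x ∈ S, G.Adj x y), f y
          = (Y.filter (fun y => (∃ x ∈ S, G.Adj x y) ∧ f y = 1)).card := by
        rw [Finset.card_filter, Finset.sum_filter]
        refine Finset.sum_congr rfl fun y hy => ?_
        by_cases hP : ∃ x ∈ S, G.Adj x y
        · rcases Nat.le_one_iff_eq_zero_or_eq_one.mp (hf1 y hy) with h | h <;>
            simp [hP, h]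
        · simp [hP]
      calc s.card ≤ ∑ x ∈ S, g x := hcard1
        _ ≤ ∑ y ∈ Y.filter (fun y => ∃ x ∈ S, G.Adj x y), f y := hall S hSX
        _ = (s.biUnion t).card := by rw [hcard2, hbi]
    obtain ⟨φ, hφinj, hφmem⟩ := (Finset.all_card_le_biUnion_card_iff_exists_injective t).mp hhall
    -- facts about φ
    have hφY : ∀ p : (Σ x : V, Fin (g' x)), φ p ∈ Y ∧ G.Adj p.1 (φ p) ∧ f (φ p) = 1 := by
      intro p
      have := hφmem p
      simp only [ht, Finset.mem_filter] at this
      exact ⟨this.1, this.2.1, this.2.2⟩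
    -- define F
    set F : SimpleGraph V :=
      { Adj := fun u v => (∃ i : Fin (g' u), φ ⟨u, i⟩ = v) ∨ (∃ i : Fin (g' v), φ ⟨v, i⟩ = u)
        symm := by
          constructor
          intro u v h
          exact h.symm
        loopless := by
          constructor
          intro u h
          rcases h with ⟨i, hi⟩ | ⟨i, hi⟩ <;>
          · have := (hφY ⟨u, i⟩).2.1
            rw [hi] at this
            exact G.loopless.irrefl u this } with hF
    have hFadj : ∀ u v, F.Adj u v ↔
        (∃ i : Fin (g' u), φ ⟨u, i⟩ = v) ∨ (∃ i : Fin (g' v), φ ⟨v, i⟩ = u) := fun u v => Iff.rfl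
    have hFG : F ≤ G := by
      intro u v h
      rcases h with ⟨i, hi⟩ | ⟨i, hi⟩
      · have := (hφY ⟨u, i⟩).2.1; rwa [hi] at this
      · have := (hφY ⟨v, i⟩).2.1; rw [hi] at this; exact this.symm
    refine ⟨F, hFG, ?_, ?_⟩
    · intro x hx
      have hgx : g' x = g x := by simp [hg', hx]
      -- neighborSet x = range of φ ⟨x, ·⟩
      have hns : F.neighborSet x = ↑(Finset.univ.image (fun i : Fin (g' x) => φ ⟨x, i⟩)) := by
        ext v
        simp only [SimpleGraph.mem_neighborSet, hFadj, Finset.coe_image, Finset.coe_univ,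
          Set.image_univ, Set.mem_range]
        constructor
        · rintro (⟨i, hi⟩ | ⟨i, hi⟩)
          · exact ⟨i, hi⟩
          · exfalso
            have := (hφY ⟨v, i⟩).1
            rw [hi] at this
            exact Finset.disjoint_left.mp hdisj hx this
        · rintro ⟨i, hi⟩
          exact Or.inl ⟨i, hi⟩
      have hcard : (F.neighborSet x).ncard = g x := by
        have hinj : Function.Injective (fun i : Fin (g' x) => φ ⟨x, i⟩) := by
          intro i j hij
          exact eq_of_heq (Sigma.mk.inj_iff.mp (hφinj hij)).2
        rw [hns, Set.ncard_coe_finset, Finset.card_image_of_injective _ hinj]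
        simp [hgx]
      rw [hcard]
      exact ⟨le_refl _, hgf x hx⟩
    · intro y hy
      have hyX : y ∉ X := Finset.disjoint_left.mp hdisj.symm hy
      have hgy : g' y = 0 := by simp [hg', hyX]
      have hns : F.neighborSet y = {v | ∃ i : Fin (g' v), φ ⟨v, i⟩ = y} := by
        ext v
        simp only [SimpleGraph.mem_neighborSet, hFadj, Set.mem_setOf_eq]
        constructor
        · rintro (⟨i, _⟩ | h)
          · exact absurd i.2 (by omega)
          · exact h
        · exact Or.inr
      by_cases hfy : f y = 0
      · have : F.neighborSet y = ∅ := by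
          rw [hns]
          ext v
          simp only [Set.mem_setOf_eq, Set.mem_empty_iff_false, iff_false]
          rintro ⟨i, hi⟩
          have := (hφY ⟨v, i⟩).2.2
          rw [hi, hfy] at this
          exact absurd this (by omega)
        rw [this, hfy]
        simp
      · have hsub : (F.neighborSet y).Subsingleton := by
          rw [hns]
          rintro u ⟨i, hi⟩ v ⟨j, hj⟩
          have := hφinj (hi.trans hj.symm)
          exact congrArg Sigma.fst this
        have h1 : (F.neighborSet y).ncard ≤ 1 := by
          rcases hsub.eq_empty_or_singleton with h | ⟨a, h⟩
          · rw [h]; simp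
          · rw [h]; simp
        omega
end

section
/- Let G[X,Y] be a bipartite multigraph on finite disjoint vertex sets X and Y, and let g, f assign a natural number to each vertex of X ∪ Y with g(v) ≤ f(v) for all v. Then G has a spanning subgraph F with g(v) ≤ deg_F(v) ≤ f(v) for every vertex v ∈ X ∪ Y if and only if for every A ⊆ X ∪ Y one has ∑_{v∈A} f(v) ≥ ∑_{u∈(X∪Y)∖A} max{0, g(u) − deg_{G−A}(u)}, where deg_{G−A}(u) is the degree of u in the multigraph obtained from G by deleting all vertices of A. -/
open Finset

/-- For `u ∈ X ∪ Y` and `A ⊆ X ∪ Y`, the degree of `u` in the multigraph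
obtained from `G` (with edge multiplicities `eG`) by deleting the vertices of `A`. -/
def degDel {X Y : Type*} [Fintype X] [Fintype Y] [DecidableEq X] [DecidableEq Y]
    (eG : X → Y → ℕ) (A : Finset (X ⊕ Y)) : X ⊕ Y → ℕ
  | Sum.inl x => ∑ y ∈ Finset.univ.filter (fun y : Y => Sum.inr y ∉ A), eG x y
  | Sum.inr y => ∑ x ∈ Finset.univ.filter (fun x : X => Sum.inl x ∉ A), eG x y

set_option maxHeartbeats 1000000

namespace FFaux

variable {X Y : Type*} [Fintype X] [Fintype Y] [DecidableEq X] [DecidableEq Y]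

def dX (eF : X → Y → ℕ) (x : X) : ℕ := ∑ y, eF x y
def dY (eF : X → Y → ℕ) (y : Y) : ℕ := ∑ x, eF x y

def Feas (eG eF : X → Y → ℕ) (fx : X → ℕ) (fy : Y → ℕ) : Prop :=
  (∀ a b, eF a b ≤ eG a b) ∧ (∀ x, dX eF x ≤ fx x) ∧ (∀ y, dY eF y ≤ fy y)

def defic (eF : X → Y → ℕ) (gx : X → ℕ) (gy : Y → ℕ) : ℕ :=
  ∑ x, (gx x - dX eF x) + ∑ y, (gy y - dY eF y)

def Cond2 (eG : X → Y → ℕ) (gx fx : X → ℕ) (gy fy : Y → ℕ) : Prop :=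
  ∀ (S : Finset X) (T : Finset Y),
    (∑ x ∈ Sᶜ, (gx x - ∑ y ∈ Tᶜ, eG x y)) + (∑ y ∈ Tᶜ, (gy y - ∑ x ∈ Sᶜ, eG x y))
      ≤ ∑ x ∈ S, fx x + ∑ y ∈ T, fy y

/-- helper: one-point modification sum identity -/
lemma sum_one_point {α : Type*} [Fintype α] [DecidableEq α] (h h' : α → ℕ) (x : α)
    (hoff : ∀ a, a ≠ x → h' a = h a) : ∑ a, h' a + h x = ∑ a, h a + h' x := by
  rw [← Finset.sum_erase_add univ h' (mem_univ x), ← Finset.sum_erase_add univ h (mem_univ x)]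
  have : ∑ a ∈ univ.erase x, h' a = ∑ a ∈ univ.erase x, h a := by
    refine Finset.sum_congr rfl fun a ha => hoff a (Finset.mem_erase.mp ha).1
  omega

/-- helper: two-point modification sum identity -/
lemma sum_two_point {α : Type*} [Fintype α] [DecidableEq α] (h h' : α → ℕ) (x x' : α)
    (hne : x ≠ x') (hoff : ∀ a, a ≠ x → a ≠ x' → h' a = h a) :
    ∑ a, h' a + h x + h x' = ∑ a, h a + h' x + h' x' := by
  rw [← Finset.sum_erase_add univ h' (mem_univ x), ← Finset.sum_erase_add univ h (mem_univ x),
    ← Finset.sum_erase_add (univ.erase x) h' (Finset.mem_erase.mpr ⟨Ne.symm hne, mem_univ x'⟩),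
    ← Finset.sum_erase_add (univ.erase x) h (Finset.mem_erase.mpr ⟨Ne.symm hne, mem_univ x'⟩)]
  have : ∑ a ∈ (univ.erase x).erase x', h' a = ∑ a ∈ (univ.erase x).erase x', h a := by
    refine Finset.sum_congr rfl fun a ha => ?_
    have h1 := Finset.mem_erase.mp ha
    have h2 := Finset.mem_erase.mp h1.2
    exact hoff a h2.1 h1.1
  omega

def IsWalk (eG eF : X → Y → ℕ) : X → List (Y × X) → Prop
  | _, [] => True
  | x, p :: L => eF x p.1 < eG x p.1 ∧ 0 < eF p.2 p.1 ∧ IsWalk eG eF p.2 L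

def endX (x : X) (L : List (Y × X)) : X := (L.map Prod.snd).getLastD x

@[simp] lemma endX_nil (x : X) : endX x ([] : List (Y × X)) = x := rfl

@[simp] lemma endX_cons (x : X) (p : Y × X) (L : List (Y × X)) :
    endX x (p :: L) = endX p.2 L := by
  unfold endX
  rw [List.map_cons, List.getLastD_cons]

lemma endX_mem (x : X) (L : List (Y × X)) : endX x L ∈ x :: L.map Prod.snd := by
  induction L generalizing x with
  | nil => simp
  | cons p L ih =>
    rw [endX_cons]
    have := ih p.2
    simp only [List.map_cons, List.mem_cons] at this ⊢
    tauto

lemma endX_append_single (x : X) (L : List (Y × X)) (p : Y × X) :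
    endX x (L ++ [p]) = p.2 := by
  induction L generalizing x with
  | nil => simp [endX]
  | cons q L ih => rw [List.cons_append, endX_cons, ih]

lemma isWalk_append (eG eF : X → Y → ℕ) (x : X) (L₁ L₂ : List (Y × X)) :
    IsWalk eG eF x (L₁ ++ L₂) ↔ IsWalk eG eF x L₁ ∧ IsWalk eG eF (endX x L₁) L₂ := by
  induction L₁ generalizing x with
  | nil => simp [IsWalk]
  | cons p L ih => simp [IsWalk, ih p.2, and_assoc]

lemma isWalk_congr (eG eF eF' : X → Y → ℕ) (x : X) (L : List (Y × X))
    (hoff : ∀ a b, b ∈ L.map Prod.fst → eF' a b = eF a b) :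
    IsWalk eG eF x L → IsWalk eG eF' x L := by
  induction L generalizing x with
  | nil => intro; trivial
  | cons p L ih =>
    rintro ⟨h1, h2, h3⟩
    have hb : p.1 ∈ (p :: L).map Prod.fst := by simp
    refine ⟨?_, ?_, ih p.2 (fun a b hb' => hoff a b (by simp [hb'])) h3⟩
    · rw [hoff _ _ hb]; exact h1
    · rw [hoff _ _ hb]; exact h2

def upd (eF : X → Y → ℕ) (x : X) (y : Y) (x' : X) : X → Y → ℕ :=
  fun a b => if b = y then (if a = x then eF a b + 1 else if a = x' then eF a b - 1 else eF a b)
    else eF a b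

lemma upd_le (eG eF : X → Y → ℕ) {x : X} {y : Y} {x' : X}
    (hle : ∀ a b, eF a b ≤ eG a b) (hxy : eF x y < eG x y) :
    ∀ a b, upd eF x y x' a b ≤ eG a b := by
  intro a b
  unfold upd
  split_ifs with h1 h2 h3
  · subst h1; subst h2; omega
  · exact Nat.le_trans (Nat.sub_le _ _) (hle a b)
  · exact hle a b
  · exact hle a b

lemma upd_off (eF : X → Y → ℕ) (x : X) (y : Y) (x' : X) (a : X) {b : Y} (hb : b ≠ y) :
    upd eF x y x' a b = eF a b := by
  unfold upd; rw [if_neg hb]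

lemma dX_upd_x (eF : X → Y → ℕ) (x : X) (y : Y) (x' : X) (hne : x ≠ x') :
    dX (upd eF x y x') x = dX eF x + 1 := by
  unfold dX
  have := sum_one_point (eF x) (upd eF x y x' x) y
    (fun b hb => upd_off eF x y x' x hb)
  have hx : upd eF x y x' x y = eF x y + 1 := by unfold upd; simp
  omega

lemma dX_upd_x' (eF : X → Y → ℕ) (x : X) (y : Y) (x' : X) (hne : x ≠ x')
    (hpos : 0 < eF x' y) : dX (upd eF x y x') x' + 1 = dX eF x' := by
  unfold dX
  have := sum_one_point (eF x') (upd eF x y x' x') y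
    (fun b hb => upd_off eF x y x' x' hb)
  have hx : upd eF x y x' x' y = eF x' y - 1 := by unfold upd; simp [Ne.symm hne]
  omega

lemma dX_upd_other (eF : X → Y → ℕ) (x : X) (y : Y) (x' : X) (a : X)
    (ha : a ≠ x) (ha' : a ≠ x') : dX (upd eF x y x') a = dX eF a := by
  unfold dX
  refine Finset.sum_congr rfl fun b _ => ?_
  unfold upd
  split_ifs with h1 h2 h3 <;> first | rfl | (exact absurd h2 ha) | (exact absurd h3 ha')

lemma dY_upd (eF : X → Y → ℕ) (x : X) (y : Y) (x' : X) (hne : x ≠ x')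
    (hpos : 0 < eF x' y) : ∀ b, dY (upd eF x y x') b = dY eF b := by
  intro b
  by_cases hb : b = y
  · rw [hb]
    unfold dY
    have := sum_two_point (fun a => eF a y) (fun a => upd eF x y x' a y) x x' hne
      (fun a ha ha' => by unfold upd; simp [ha, ha'])
    have h1 : upd eF x y x' x y = eF x y + 1 := by unfold upd; simp
    have h2 : upd eF x y x' x' y = eF x' y - 1 := by unfold upd; simp [Ne.symm hne]
    omega
  · unfold dY
    exact Finset.sum_congr rfl fun a _ => upd_off eF x y x' a hb

def augF : (X → Y → ℕ) → X → List (Y × X) → X → Y → ℕ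
  | eF, _, [] => eF
  | eF, x, p :: L => augF (upd eF x p.1 p.2) p.2 L


open Finset
variable {X Y : Type*} [Fintype X] [Fintype Y] [DecidableEq X] [DecidableEq Y]

lemma augF_spec (eG : X → Y → ℕ) :
    ∀ (L : List (Y × X)) (x : X) (eF : X → Y → ℕ),
    (∀ a b, eF a b ≤ eG a b) → IsWalk eG eF x L →
    (x :: L.map Prod.snd).Nodup → (L.map Prod.fst).Nodup →
    (∀ a b, augF eF x L a b ≤ eG a b) ∧
    (∀ b, dY (augF eF x L) b = dY eF b) ∧
    (∀ a, dX (augF eF x L) a + (if a = endX x L then 1 else 0)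
        = dX eF a + (if a = x then 1 else 0)) ∧
    (∀ a b, b ∉ L.map Prod.fst → augF eF x L a b = eF a b) := by
  intro L
  induction L with
  | nil =>
    intro x eF hle hw hn1 hn2
    refine ⟨hle, fun b => rfl, fun a => rfl, fun a b _ => rfl⟩
  | cons p L ih =>
    intro x eF hle hw hn1 hn2
    obtain ⟨h1, h2, hwt⟩ := hw
    rw [List.map_cons, List.nodup_cons] at hn1 hn2
    obtain ⟨hxmem, hn1'⟩ := hn1
    obtain ⟨hymem, hn2'⟩ := hn2
    have hxx' : x ≠ p.2 := by
      intro h; exact hxmem (h ▸ List.mem_cons_self)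
    have hxsnd : x ∉ L.map Prod.snd := fun h => hxmem (List.mem_cons_of_mem _ h)
    set eF₁ := upd eF x p.1 p.2 with heF₁
    have hle₁ : ∀ a b, eF₁ a b ≤ eG a b := upd_le eG eF hle h1
    have hoff : ∀ a b, b ∈ L.map Prod.fst → eF₁ a b = eF a b := by
      intro a b hb
      exact upd_off eF x p.1 p.2 a (fun h => hymem (h ▸ hb))
    have hw₁ : IsWalk eG eF₁ p.2 L := isWalk_congr eG eF eF₁ p.2 L hoff hwt
    obtain ⟨c1, c2, c3, c4⟩ := ih p.2 eF₁ hle₁ hw₁ hn1' hn2'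
    have haug : augF eF x (p :: L) = augF eF₁ p.2 L := rfl
    have hendmem := endX_mem p.2 L
    have hendne : x ≠ endX p.2 L := by
      intro h
      rw [← h] at hendmem
      rcases List.mem_cons.mp hendmem with h' | h'
      · exact hxx' h'
      · exact hxsnd h'
    refine ⟨?_, ?_, ?_, ?_⟩
    · rw [haug]; exact c1
    · intro b
      rw [haug, c2 b]
      exact dY_upd eF x p.1 p.2 hxx' h2 b
    · intro a
      rw [haug, endX_cons]
      have hIH := c3 a
      by_cases hax : a = x
      · have hne1 : a ≠ endX p.2 L := by rw [hax]; exact hendne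
        have hne2 : a ≠ p.2 := by rw [hax]; exact hxx'
        have h5 : dX eF₁ a = dX eF a + 1 := by rw [hax]; exact dX_upd_x eF x p.1 p.2 hxx'
        rw [if_neg hne1, if_pos hax]
        rw [if_neg hne1, if_neg hne2] at hIH
        omega
      · by_cases hax' : a = p.2
        · have h5 : dX eF₁ a + 1 = dX eF a := by
            rw [hax']; exact dX_upd_x' eF x p.1 p.2 hxx' h2
          rw [if_pos hax'] at hIH
          rw [if_neg hax]
          omega
        · have h5 : dX eF₁ a = dX eF a := dX_upd_other eF x p.1 p.2 a hax hax'
          rw [if_neg hax]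
          rw [if_neg hax'] at hIH
          omega
    · intro a b hb
      rw [List.map_cons, List.mem_cons] at hb
      push_neg at hb
      rw [haug, c4 a b hb.2]
      exact upd_off eF x p.1 p.2 a hb.1

lemma dX_bump (eF : X → Y → ℕ) (x : X) (y : Y) (a : X) :
    dX (fun a b => if a = x ∧ b = y then eF a b + 1 else eF a b) a
      = dX eF a + (if a = x then 1 else 0) := by
  unfold dX
  dsimp only
  by_cases hax : a = x
  · rw [hax, if_pos rfl]
    have h0 := sum_one_point (eF x) (fun b => if x = x ∧ b = y then eF x b + 1 else eF x b) y
      (fun b hb => by simp [hb])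
    have hv : (if x = x ∧ y = y then eF x y + 1 else eF x y) = eF x y + 1 := by simp
    rw [hv] at h0
    omega
  · rw [if_neg hax]
    refine Finset.sum_congr rfl fun b _ => by simp [hax]

lemma dY_bump (eF : X → Y → ℕ) (x : X) (y : Y) (b : Y) :
    dY (fun a b => if a = x ∧ b = y then eF a b + 1 else eF a b) b
      = dY eF b + (if b = y then 1 else 0) := by
  unfold dY
  dsimp only
  by_cases hby : b = y
  · rw [hby, if_pos rfl]
    have h0 := sum_one_point (fun a => eF a y) (fun a => if a = x ∧ y = y then eF a y + 1 else eF a y) x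
      (fun a ha => by simp [ha])
    have hv : (if x = x ∧ y = y then eF x y + 1 else eF x y) = eF x y + 1 := by simp
    rw [hv] at h0
    omega
  · rw [if_neg hby]
    refine Finset.sum_congr rfl fun a _ => by simp [hby]

/-- Success case (b): a walk ends at a vertex with degree above its lower bound. -/
lemma succB (eG eF : X → Y → ℕ) (gx fx : X → ℕ) (gy fy : Y → ℕ)
    (hle : ∀ a b, eF a b ≤ eG a b) (hfx : ∀ x, dX eF x ≤ fx x) (hfy : ∀ y, dY eF y ≤ fy y)
    (hgxf : ∀ x, gx x ≤ fx x)
    (x₀ : X) (hx₀ : dX eF x₀ < gx x₀)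
    (L : List (Y × X)) (hw : IsWalk eG eF x₀ L)
    (hn1 : (x₀ :: L.map Prod.snd).Nodup) (hn2 : (L.map Prod.fst).Nodup)
    (hgt : gx (endX x₀ L) < dX eF (endX x₀ L)) :
    ∃ eF', Feas eG eF' fx fy ∧ defic eF' gx gy < defic eF gx gy := by
  obtain ⟨s1, s2, s3, s4⟩ := augF_spec eG L x₀ eF hle hw hn1 hn2
  set x := endX x₀ L with hx
  set eF' := augF eF x₀ L with heF'
  have hx0ne : x₀ ≠ x := by intro h; rw [← h] at hgt; omega
  have hdx : ∀ a, dX eF' a ≤ dX eF a + (if a = x₀ then 1 else 0) := by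
    intro a; have := s3 a; omega
  refine ⟨eF', ⟨s1, ?_, fun b => by rw [s2]; exact hfy b⟩, ?_⟩
  · intro a
    have h3 := s3 a
    by_cases ha : a = x₀
    · have hnex : a ≠ x := by rw [ha]; exact hx0ne
      rw [if_pos ha, if_neg hnex] at h3
      have h6 := hgxf x₀
      rw [ha] at h3 ⊢
      omega
    · rw [if_neg ha] at h3
      have := hfx a
      omega
  · have hy : ∑ y, (gy y - dY eF' y) = ∑ y, (gy y - dY eF y) :=
      Finset.sum_congr rfl fun b _ => by rw [s2]
    have hxlt : ∑ a, (gx a - dX eF' a) < ∑ a, (gx a - dX eF a) := by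
      refine Finset.sum_lt_sum (fun a _ => ?_) ⟨x₀, mem_univ _, ?_⟩
      · have h3 := s3 a
        by_cases hax : a = x₀
        · have hnex : a ≠ x := by rw [hax]; exact hx0ne
          rw [if_neg hnex, if_pos hax] at h3
          omega
        · rw [if_neg hax] at h3
          by_cases hax' : a = x
          · rw [if_pos hax'] at h3
            have hg : gx a < dX eF a := by rw [hax']; exact hgt
            omega
          · rw [if_neg hax'] at h3
            omega
      · have h3 := s3 x₀
        rw [if_neg hx0ne, if_pos rfl] at h3
        omega
    unfold defic
    omega

/-- Success case (a): a walk ends at a vertex having a fresh unsaturated edge to a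
vertex of `Y` with slack. -/
lemma succA (eG eF : X → Y → ℕ) (gx fx : X → ℕ) (gy fy : Y → ℕ)
    (hle : ∀ a b, eF a b ≤ eG a b) (hfx : ∀ x, dX eF x ≤ fx x) (hfy : ∀ y, dY eF y ≤ fy y)
    (hgxf : ∀ x, gx x ≤ fx x)
    (x₀ : X) (hx₀ : dX eF x₀ < gx x₀)
    (L : List (Y × X)) (hw : IsWalk eG eF x₀ L)
    (hn1 : (x₀ :: L.map Prod.snd).Nodup) (hn2 : (L.map Prod.fst).Nodup)
    (y : Y) (hyf : y ∉ L.map Prod.fst)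
    (hlt : eF (endX x₀ L) y < eG (endX x₀ L) y) (hslack : dY eF y < fy y) :
    ∃ eF', Feas eG eF' fx fy ∧ defic eF' gx gy < defic eF gx gy := by
  obtain ⟨s1, s2, s3, s4⟩ := augF_spec eG L x₀ eF hle hw hn1 hn2
  set x := endX x₀ L with hx
  set eF' := augF eF x₀ L with heF'
  set eF'' : X → Y → ℕ := fun a b => if a = x ∧ b = y then eF' a b + 1 else eF' a b with heF''
  have hdx : ∀ a, dX eF'' a = dX eF a + (if a = x₀ then 1 else 0) := by
    intro a
    have h3 := s3 a
    have hb := dX_bump eF' x y a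
    rw [← heF''] at hb
    omega
  have hdy : ∀ b, dY eF'' b = dY eF b + (if b = y then 1 else 0) := by
    intro b
    have hb := dY_bump eF' x y b
    rw [← heF''] at hb
    rw [hb, s2]
  refine ⟨eF'', ⟨?_, ?_, ?_⟩, ?_⟩
  · intro a b
    rw [heF'']
    dsimp only
    by_cases h : a = x ∧ b = y
    · rw [if_pos h, s4 a b (h.2 ▸ hyf)]
      obtain ⟨h1, h2⟩ := h
      rw [h1, h2]
      exact hlt
    · rw [if_neg h]; exact s1 a b
  · intro a
    have h1 := hdx a
    by_cases ha : a = x₀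
    · rw [if_pos ha] at h1
      have h2 := hgxf x₀
      rw [ha] at h1 ⊢
      omega
    · rw [if_neg ha] at h1
      have h2 := hfx a
      omega
  · intro b
    have h1 := hdy b
    by_cases hb : b = y
    · rw [if_pos hb] at h1
      rw [hb] at h1 ⊢
      omega
    · rw [if_neg hb] at h1
      have h2 := hfy b
      omega
  · have hxlt : ∑ a, (gx a - dX eF'' a) < ∑ a, (gx a - dX eF a) := by
      refine Finset.sum_lt_sum (fun a _ => ?_) ⟨x₀, mem_univ _, ?_⟩
      · have := hdx a
        by_cases ha : a = x₀ <;> [rw [if_pos ha] at this; rw [if_neg ha] at this] <;> omega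
      · have := hdx x₀
        rw [if_pos rfl] at this
        omega
    have hyle : ∑ b, (gy b - dY eF'' b) ≤ ∑ b, (gy b - dY eF b) := by
      refine Finset.sum_le_sum fun b _ => ?_
      have := hdy b
      omega
    unfold defic
    omega
lemma nodup_append_single {α : Type*} {l : List α} {a : α} (h : l.Nodup) (ha : a ∉ l) :
    (l ++ [a]).Nodup := by
  rw [List.nodup_append]
  exact ⟨h, List.nodup_singleton a, fun x hx b hb => by
    rw [List.mem_singleton] at hb; intro hxb; subst hb; subst hxb; exact ha hx⟩

lemma keyX (eG : X → Y → ℕ) (gx fx : X → ℕ) (gy fy : Y → ℕ)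
    (hC : Cond2 eG gx fx gy fy) (hgxf : ∀ x, gx x ≤ fx x)
    (eF : X → Y → ℕ) (hF : Feas eG eF fx fy)
    (x₀ : X) (hx₀ : dX eF x₀ < gx x₀) :
    ∃ eF', Feas eG eF' fx fy ∧ defic eF' gx gy < defic eF gx gy := by
  classical
  obtain ⟨hle, hfx, hfy⟩ := hF
  set Reach : X → Prop := fun x => ∃ L : List (Y × X), IsWalk eG eF x₀ L ∧
    (x₀ :: L.map Prod.snd).Nodup ∧ (L.map Prod.fst).Nodup ∧ endX x₀ L = x with hReach
  have hreach0 : Reach x₀ := ⟨[], trivial, by simp, by simp, rfl⟩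
  -- success case (b)
  by_cases hsb : ∃ x, Reach x ∧ gx x < dX eF x
  · obtain ⟨x, ⟨L, hw, hn1, hn2, hend⟩, hgt⟩ := hsb
    exact succB eG eF gx fx gy fy hle hfx hfy hgxf x₀ hx₀ L hw hn1 hn2 (hend ▸ hgt)
  -- success case (a)
  by_cases hsa : ∃ y x, Reach x ∧ eF x y < eG x y ∧ dY eF y < fy y
  · obtain ⟨y, x, ⟨L, hw, hn1, hn2, hend⟩, hlt, hslack⟩ := hsa
    subst hend
    by_cases hyf : y ∈ L.map Prod.fst
    · -- take the prefix of `L` before the occurrence of `y`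
      obtain ⟨q, hqL, hq1⟩ := List.mem_map.mp hyf
      obtain ⟨L₁, L₂, rfl⟩ := List.append_of_mem hqL
      have hw1 : IsWalk eG eF x₀ L₁ ∧ IsWalk eG eF (endX x₀ L₁) (q :: L₂) :=
        (isWalk_append eG eF x₀ L₁ (q :: L₂)).mp hw
      have hlt1 : eF (endX x₀ L₁) y < eG (endX x₀ L₁) y := by
        have := hw1.2.1
        rwa [hq1] at this
      have hsub1 : (x₀ :: L₁.map Prod.snd).Sublist (x₀ :: (L₁ ++ q :: L₂).map Prod.snd) := by
        refine List.Sublist.cons₂ x₀ (List.Sublist.map Prod.snd ?_)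
        exact List.sublist_append_left L₁ (q :: L₂)
      have hsub2 : (L₁.map Prod.fst).Sublist ((L₁ ++ q :: L₂).map Prod.fst) :=
        List.Sublist.map Prod.fst (List.sublist_append_left L₁ (q :: L₂))
      have hyf1 : y ∉ L₁.map Prod.fst := by
        have := hn2
        rw [List.map_append, List.map_cons, List.nodup_append] at this
        intro hm
        exact this.2.2 y hm q.1 List.mem_cons_self hq1.symm
      exact succA eG eF gx fx gy fy hle hfx hfy hgxf x₀ hx₀ L₁ hw1.1
        (hn1.sublist hsub1) (hn2.sublist hsub2) y hyf1 hlt1 hslack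
    · exact succA eG eF gx fx gy fy hle hfx hfy hgxf x₀ hx₀ L hw hn1 hn2 y hyf hlt hslack
  -- no augmentation: derive a contradiction with Cond2
  exfalso
  push_neg at hsb hsa
  -- closure property
  have hclose : ∀ y x x', Reach x → eF x y < eG x y → 0 < eF x' y → Reach x' := by
    intro y x x' hRx hlt hpos
    obtain ⟨L, hw, hn1, hn2, hend⟩ := hRx
    by_cases hx's : x' ∈ x₀ :: L.map Prod.snd
    · rcases List.mem_cons.mp hx's with h | h
      · exact h ▸ hreach0
      · obtain ⟨q, hqL, hq2⟩ := List.mem_map.mp h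
        obtain ⟨L₁, L₂, rfl⟩ := List.append_of_mem hqL
        refine ⟨L₁ ++ [q], ?_, ?_, ?_, ?_⟩
        · have : IsWalk eG eF x₀ ((L₁ ++ [q]) ++ L₂) := by
            rwa [List.append_assoc, List.singleton_append]
          exact ((isWalk_append eG eF x₀ (L₁ ++ [q]) L₂).mp this).1
        · refine hn1.sublist (List.Sublist.cons₂ x₀ (List.Sublist.map Prod.snd ?_))
          refine List.Sublist.append_left ?_ L₁
          exact List.Sublist.cons₂ q (List.nil_sublist L₂)
        · refine hn2.sublist (List.Sublist.map Prod.fst ?_)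
          refine List.Sublist.append_left ?_ L₁
          exact List.Sublist.cons₂ q (List.nil_sublist L₂)
        · rw [endX_append_single, hq2]
    · by_cases hyv : y ∈ L.map Prod.fst
      · obtain ⟨q, hqL, hq1⟩ := List.mem_map.mp hyv
        obtain ⟨L₁, L₂, rfl⟩ := List.append_of_mem hqL
        have hw1 : IsWalk eG eF x₀ L₁ ∧ IsWalk eG eF (endX x₀ L₁) (q :: L₂) :=
          (isWalk_append eG eF x₀ L₁ (q :: L₂)).mp hw
        have hlt1 : eF (endX x₀ L₁) y < eG (endX x₀ L₁) y := by
          have := hw1.2.1; rwa [hq1] at this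
        refine ⟨L₁ ++ [(y, x')], ?_, ?_, ?_, ?_⟩
        · rw [isWalk_append]
          exact ⟨hw1.1, hlt1, hpos, trivial⟩
        · rw [List.map_append]
          have hnod : (x₀ :: L₁.map Prod.snd).Nodup := by
            refine hn1.sublist (List.Sublist.cons₂ x₀ (List.Sublist.map Prod.snd ?_))
            exact List.sublist_append_left L₁ (q :: L₂)
          have hx'n : x' ∉ x₀ :: L₁.map Prod.snd := by
            intro hm
            refine hx's ?_
            rcases List.mem_cons.mp hm with h | h
            · exact h ▸ List.mem_cons_self
            · refine List.mem_cons_of_mem _ ?_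
              rw [List.map_append]
              exact List.mem_append_left _ h
          have := nodup_append_single hnod hx'n
          simpa using this
        · rw [List.map_append]
          have hnod : (L₁.map Prod.fst).Nodup :=
            hn2.sublist (List.Sublist.map Prod.fst (List.sublist_append_left L₁ (q :: L₂)))
          have hyn : y ∉ L₁.map Prod.fst := by
            have := hn2
            rw [List.map_append, List.map_cons, List.nodup_append] at this
            intro hm
            exact this.2.2 y hm q.1 List.mem_cons_self hq1.symm
          exact nodup_append_single hnod hyn
        · exact endX_append_single x₀ L₁ (y, x')
      · refine ⟨L ++ [(y, x')], ?_, ?_, ?_, ?_⟩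
        · rw [isWalk_append, hend]
          exact ⟨hw, hlt, hpos, trivial⟩
        · rw [List.map_append]
          have hx'n : x' ∉ x₀ :: L.map Prod.snd := hx's
          have := nodup_append_single (l := x₀ :: L.map Prod.snd) hn1 hx'n
          simpa using this
        · rw [List.map_append]
          exact nodup_append_single hn2 hyv
        · exact endX_append_single x₀ L (y, x')
  -- the cut
  set T : Finset Y := univ.filter (fun y => ∃ x, Reach x ∧ eF x y < eG x y) with hT
  set RXf : Finset X := univ.filter Reach with hRXf
  have hx₀mem : x₀ ∈ RXf := by rw [hRXf]; simp [hreach0]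
  have hT_dY : ∀ y ∈ T, dY eF y = fy y := by
    intro y hy
    rw [hT, mem_filter] at hy
    obtain ⟨-, x, hRx, hlt⟩ := hy
    exact le_antisymm (hfy y) (hsa y x hRx hlt)
  have hTc : ∀ x, Reach x → ∀ y, y ∉ T → eF x y = eG x y := by
    intro x hRx y hy
    rw [hT, mem_filter] at hy
    push_neg at hy
    have := hy (mem_univ y)
    exact le_antisymm (hle x y) (this x hRx)
  have hzero : ∀ y ∈ T, ∀ x, x ∉ RXf → eF x y = 0 := by
    intro y hy x hx
    rw [hT, mem_filter] at hy
    obtain ⟨-, x₁, hRx₁, hlt₁⟩ := hy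
    by_contra hne
    have hpos : 0 < eF x y := Nat.pos_of_ne_zero hne
    exact hx (by rw [hRXf]; simp [hclose y x₁ x hRx₁ hlt₁ hpos])
  -- per-vertex identity on RXf
  have hper : ∀ x ∈ RXf, gx x - ∑ y ∈ Tᶜ, eG x y = (gx x - dX eF x) + ∑ y ∈ T, eF x y := by
    intro x hx
    rw [hRXf, mem_filter] at hx
    have hRx := hx.2
    have e1 : ∑ y ∈ Tᶜ, eG x y = ∑ y ∈ Tᶜ, eF x y :=
      Finset.sum_congr rfl fun y hy => (hTc x hRx y (Finset.mem_compl.mp hy)).symm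
    have e2 : ∑ y ∈ T, eF x y + ∑ y ∈ Tᶜ, eF x y = dX eF x := Finset.sum_add_sum_compl T (eF x)
    have e3 : dX eF x ≤ gx x := hsb x hRx
    omega
  have hsum1 : ∑ x ∈ RXf, (gx x - ∑ y ∈ Tᶜ, eG x y)
      = ∑ x ∈ RXf, (gx x - dX eF x) + ∑ x ∈ RXf, ∑ y ∈ T, eF x y := by
    rw [← Finset.sum_add_distrib]
    exact Finset.sum_congr rfl hper
  have h4 : ∑ x ∈ RXf, ∑ y ∈ T, eF x y = ∑ y ∈ T, fy y := by
    rw [Finset.sum_comm]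
    refine Finset.sum_congr rfl fun y hy => ?_
    have : ∑ x ∈ RXf, eF x y = ∑ x, eF x y := by
      refine Finset.sum_subset (Finset.subset_univ RXf) fun x _ hx => hzero y hy x hx
    rw [this]
    exact hT_dY y hy
  have h5 : 1 ≤ gx x₀ - dX eF x₀ := by omega
  have h6 : gx x₀ - dX eF x₀ ≤ ∑ x ∈ RXf, (gx x - dX eF x) :=
    Finset.single_le_sum (f := fun x => gx x - dX eF x) (fun x _ => Nat.zero_le _) hx₀mem
  have h7 : ∑ x ∈ RXf, (gx x - ∑ y ∈ Tᶜ, eG x y)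
      ≤ ∑ x ∈ univ, (gx x - ∑ y ∈ Tᶜ, eG x y) :=
    Finset.sum_le_sum_of_subset (Finset.subset_univ RXf)
  have hC' := hC ∅ T
  rw [Finset.compl_empty, Finset.sum_empty] at hC'
  omega

lemma cond2_flip (eG : X → Y → ℕ) (gx fx : X → ℕ) (gy fy : Y → ℕ)
    (hC : Cond2 eG gx fx gy fy) : Cond2 (fun y x => eG x y) gy fy gx fx := by
  intro S T
  have := hC T S
  dsimp only
  omega

lemma step (eG : X → Y → ℕ) (gx fx : X → ℕ) (gy fy : Y → ℕ)
    (hC : Cond2 eG gx fx gy fy) (hgxf : ∀ x, gx x ≤ fx x) (hgyf : ∀ y, gy y ≤ fy y)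
    (eF : X → Y → ℕ) (hF : Feas eG eF fx fy) (hpos : 0 < defic eF gx gy) :
    ∃ eF', Feas eG eF' fx fy ∧ defic eF' gx gy < defic eF gx gy := by
  by_cases hX : ∃ x, dX eF x < gx x
  · obtain ⟨x₀, hx₀⟩ := hX
    exact keyX eG gx fx gy fy hC hgxf eF hF x₀ hx₀
  · have hY : ∃ y, dY eF y < gy y := by
      by_contra hY
      push_neg at hX hY
      have h1 : ∑ x, (gx x - dX eF x) = 0 :=
        Finset.sum_eq_zero fun x _ => by have := hX x; omega
      have h2 : ∑ y, (gy y - dY eF y) = 0 :=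
        Finset.sum_eq_zero fun y _ => by have := hY y; omega
      unfold defic at hpos
      omega
    obtain ⟨y₀, hy₀⟩ := hY
    obtain ⟨hle, hfx, hfy⟩ := hF
    have hC' : Cond2 (fun y x => eG x y) gy fy gx fx := cond2_flip eG gx fx gy fy hC
    have hF' : Feas (fun y x => eG x y) (fun y x => eF x y) fy fx :=
      ⟨fun b a => hle a b, fun y => hfy y, fun x => hfx x⟩
    have hy₀' : dX (fun y x => eF x y) y₀ < gy y₀ := hy₀
    obtain ⟨eF₁, ⟨hle₁, hfy₁, hfx₁⟩, hd₁⟩ :=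
      keyX (fun y x => eG x y) gy fy gx fx hC' hgyf (fun y x => eF x y) hF' y₀ hy₀'
    refine ⟨fun x y => eF₁ y x, ⟨fun a b => hle₁ b a, fun x => hfx₁ x, fun y => hfy₁ y⟩, ?_⟩
    have e1 : defic (fun x y => eF₁ y x) gx gy = defic eF₁ gy gx := by
      unfold defic dX dY
      dsimp only
      omega
    have e2 : defic (fun y x => eF x y) gy gx = defic eF gx gy := by
      unfold defic dX dY
      dsimp only
      omega
    omega

lemma exists_factor (eG : X → Y → ℕ) (gx fx : X → ℕ) (gy fy : Y → ℕ)
    (hC : Cond2 eG gx fx gy fy) (hgxf : ∀ x, gx x ≤ fx x) (hgyf : ∀ y, gy y ≤ fy y) :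
    ∃ eF : X → Y → ℕ, (∀ a b, eF a b ≤ eG a b) ∧
      (∀ x, gx x ≤ dX eF x ∧ dX eF x ≤ fx x) ∧
      (∀ y, gy y ≤ dY eF y ∧ dY eF y ≤ fy y) := by
  have key : ∀ n (eF : X → Y → ℕ), Feas eG eF fx fy → defic eF gx gy ≤ n →
      ∃ eF', Feas eG eF' fx fy ∧ defic eF' gx gy = 0 := by
    intro n
    induction n with
    | zero => intro eF hF hd; exact ⟨eF, hF, Nat.le_zero.mp hd⟩
    | succ n ih =>
      intro eF hF hd
      by_cases h0 : defic eF gx gy = 0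
      · exact ⟨eF, hF, h0⟩
      · obtain ⟨eF', hF', hd'⟩ := step eG gx fx gy fy hC hgxf hgyf eF hF (Nat.pos_of_ne_zero h0)
        exact ih eF' hF' (by omega)
  have hF0 : Feas eG (fun _ _ => 0) fx fy := by
    refine ⟨fun a b => Nat.zero_le _, fun x => ?_, fun y => ?_⟩
    · unfold dX; simp
    · unfold dY; simp
  obtain ⟨eF, ⟨hle, hfx, hfy⟩, hd⟩ := key (defic (fun _ _ => 0) gx gy) (fun _ _ => 0) hF0 le_rfl
  unfold defic at hd
  have h1 : ∑ x, (gx x - dX eF x) = 0 := by omega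
  have h2 : ∑ y, (gy y - dY eF y) = 0 := by omega
  rw [Finset.sum_eq_zero_iff] at h1 h2
  refine ⟨eF, hle, fun x => ⟨?_, hfx x⟩, fun y => ⟨?_, hfy y⟩⟩
  · have := h1 x (mem_univ x); omega
  · have := h2 y (mem_univ y); omega

lemma compl_disjSum (S : Finset X) (T : Finset Y) :
    (S.disjSum T)ᶜ = Sᶜ.disjSum Tᶜ := by
  ext u
  cases u <;> simp

end FFaux

open FFaux

/-- Theorem 1 (Heinrich et al.'s form of the Folkman–Fulkerson theorem): a
bipartite multigraph `G[X,Y]` has a `(g,f)`-factor iff for every `A ⊆ X ∪ Y`,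
`∑_{v∈A} f(v) ≥ ∑_{u∉A} max{0, g(u) − deg_{G−A}(u)}`. -/
theorem bipartite_gf_factor_folkman_fulkerson
    {X Y : Type*} [Fintype X] [Fintype Y] [DecidableEq X] [DecidableEq Y]
    (eG : X → Y → ℕ) (g f : X ⊕ Y → ℕ)
    (hgf : ∀ v : X ⊕ Y, g v ≤ f v) :
    (∃ eF : X → Y → ℕ,
      (∀ x y, eF x y ≤ eG x y) ∧
      (∀ x : X, g (Sum.inl x) ≤ ∑ y, eF x y ∧ ∑ y, eF x y ≤ f (Sum.inl x)) ∧
      (∀ y : Y, g (Sum.inr y) ≤ ∑ x, eF x y ∧ ∑ x, eF x y ≤ f (Sum.inr y)))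
    ↔
    (∀ A : Finset (X ⊕ Y),
      ∑ u ∈ Aᶜ, (g u - degDel eG A u) ≤ ∑ v ∈ A, f v) := by
  have hdl : ∀ (A : Finset (X ⊕ Y)) (x : X),
      degDel eG A (Sum.inl x) = ∑ y ∈ A.toRightᶜ, eG x y := by
    intro A x
    show ∑ y ∈ Finset.univ.filter (fun y : Y => Sum.inr y ∉ A), eG x y = _
    congr 1
    ext y
    simp
  have hdr : ∀ (A : Finset (X ⊕ Y)) (y : Y),
      degDel eG A (Sum.inr y) = ∑ x ∈ A.toLeftᶜ, eG x y := by
    intro A y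
    show ∑ x ∈ Finset.univ.filter (fun x : X => Sum.inl x ∉ A), eG x y = _
    congr 1
    ext x
    simp
  constructor
  · rintro ⟨eF, hle, hX, hY⟩ A
    set S := A.toLeft with hS
    set T := A.toRight with hT
    have hA : S.disjSum T = A := Finset.toLeft_disjSum_toRight
    rw [← hA, compl_disjSum, Finset.sum_disjSum, Finset.sum_disjSum, hA]
    have hstep1 : ∀ x ∈ Sᶜ, g (Sum.inl x) - degDel eG A (Sum.inl x) ≤ ∑ y ∈ T, eF x y := by
      intro x _
      rw [hdl A x, ← hT]
      have h1 : ∑ y ∈ Tᶜ, eF x y ≤ ∑ y ∈ Tᶜ, eG x y := Finset.sum_le_sum fun y _ => hle x y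
      have h2 : ∑ y ∈ T, eF x y + ∑ y ∈ Tᶜ, eF x y = ∑ y, eF x y :=
        Finset.sum_add_sum_compl T (eF x)
      have h3 := (hX x).1
      omega
    have hstep2 : ∀ y ∈ Tᶜ, g (Sum.inr y) - degDel eG A (Sum.inr y) ≤ ∑ x ∈ S, eF x y := by
      intro y _
      rw [hdr A y, ← hS]
      have h1 : ∑ x ∈ Sᶜ, eF x y ≤ ∑ x ∈ Sᶜ, eG x y := Finset.sum_le_sum fun x _ => hle x y
      have h2 : ∑ x ∈ S, eF x y + ∑ x ∈ Sᶜ, eF x y = ∑ x, eF x y :=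
        Finset.sum_add_sum_compl S (fun x => eF x y)
      have h3 := (hY y).1
      omega
    have hb1 : ∑ x ∈ Sᶜ, (g (Sum.inl x) - degDel eG A (Sum.inl x)) ≤ ∑ y ∈ T, f (Sum.inr y) := by
      calc ∑ x ∈ Sᶜ, (g (Sum.inl x) - degDel eG A (Sum.inl x))
          ≤ ∑ x ∈ Sᶜ, ∑ y ∈ T, eF x y := Finset.sum_le_sum hstep1
        _ ≤ ∑ x, ∑ y ∈ T, eF x y :=
            Finset.sum_le_sum_of_subset (Finset.subset_univ _)
        _ = ∑ y ∈ T, ∑ x, eF x y := Finset.sum_comm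
        _ ≤ ∑ y ∈ T, f (Sum.inr y) := Finset.sum_le_sum fun y _ => (hY y).2
    have hb2 : ∑ y ∈ Tᶜ, (g (Sum.inr y) - degDel eG A (Sum.inr y)) ≤ ∑ x ∈ S, f (Sum.inl x) := by
      calc ∑ y ∈ Tᶜ, (g (Sum.inr y) - degDel eG A (Sum.inr y))
          ≤ ∑ y ∈ Tᶜ, ∑ x ∈ S, eF x y := Finset.sum_le_sum hstep2
        _ ≤ ∑ y, ∑ x ∈ S, eF x y :=
            Finset.sum_le_sum_of_subset (Finset.subset_univ _)
        _ = ∑ x ∈ S, ∑ y, eF x y := Finset.sum_comm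
        _ ≤ ∑ x ∈ S, f (Sum.inl x) := Finset.sum_le_sum fun x _ => (hX x).2
    omega
  · intro hA
    have hC : Cond2 eG (fun x => g (Sum.inl x)) (fun x => f (Sum.inl x))
        (fun y => g (Sum.inr y)) (fun y => f (Sum.inr y)) := by
      intro S T
      dsimp only
      have := hA (S.disjSum T)
      rw [compl_disjSum, Finset.sum_disjSum, Finset.sum_disjSum] at this
      have e1 : ∀ x : X, degDel eG (S.disjSum T) (Sum.inl x) = ∑ y ∈ Tᶜ, eG x y := by
        intro x
        rw [hdl]
        congr 2
        simp
      have e2 : ∀ y : Y, degDel eG (S.disjSum T) (Sum.inr y) = ∑ x ∈ Sᶜ, eG x y := by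
        intro y
        rw [hdr]
        congr 2
        simp
      have r1 : ∑ x ∈ Sᶜ, (g (Sum.inl x) - degDel eG (S.disjSum T) (Sum.inl x))
          = ∑ x ∈ Sᶜ, (g (Sum.inl x) - ∑ y ∈ Tᶜ, eG x y) :=
        Finset.sum_congr rfl fun x _ => by rw [e1]
      have r2 : ∑ y ∈ Tᶜ, (g (Sum.inr y) - degDel eG (S.disjSum T) (Sum.inr y))
          = ∑ y ∈ Tᶜ, (g (Sum.inr y) - ∑ x ∈ Sᶜ, eG x y) :=
        Finset.sum_congr rfl fun y _ => by rw [e2]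
      omega
    obtain ⟨eF, hle, hX, hY⟩ := exists_factor eG _ _ _ _ hC
      (fun x => hgf (Sum.inl x)) (fun y => hgf (Sum.inr y))
    exact ⟨eF, hle, hX, hY⟩
end

section
/- Let G[X,Y] be a bipartite multigraph on finite disjoint vertex sets X and Y, and let g, f assign a natural number to each vertex of X ∪ Y with g(v) ≤ f(v) for all v. Then G has a spanning subgraph F with g(v) ≤ deg_F(v) ≤ f(v) for every vertex v ∈ X ∪ Y if and only if both of the following hold: (i) for every A ⊆ X, ∑_{x∈A} g(x) ≤ ∑_{y∈Y} min{f(y), e_G(y,A)}, and (ii) for every B ⊆ Y, ∑_{y∈B} g(y) ≤ ∑_{x∈X} min{f(x), e_G(x,B)}. -/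
section CK
set_option linter.unusedSectionVars false

variable {X Y : Type*} [Fintype X] [Fintype Y]

/-- degree function on the sum type -/
def ckDeg (F : X → Y → ℕ) : X ⊕ Y → ℕ :=
  Sum.elim (fun x => ∑ y, F x y) (fun y => ∑ x, F x y)

/-- total satisfied demand -/
def ckPhi (g : X ⊕ Y → ℕ) (F : X → Y → ℕ) : ℕ :=
  ∑ v : X ⊕ Y, min (ckDeg F v) (g v)

def ckIndL [DecidableEq X] [DecidableEq Y] : X ⊕ Y → X ⊕ Y → ℕ := fun v u =>
  match v with
  | Sum.inl _ => if u = v then 1 else 0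
  | Sum.inr _ => 0

def ckIndR [DecidableEq X] [DecidableEq Y] : X ⊕ Y → X ⊕ Y → ℕ := fun v u =>
  match v with
  | Sum.inl _ => 0
  | Sum.inr _ => if u = v then 1 else 0

variable [DecidableEq X] [DecidableEq Y]

@[simp] lemma ckIndL_inl (x : X) (u : X ⊕ Y) :
    ckIndL (Sum.inl x) u = if u = Sum.inl x then 1 else 0 := rfl
@[simp] lemma ckIndL_inr (y : Y) (u : X ⊕ Y) :
    ckIndL (Sum.inr y : X ⊕ Y) u = 0 := rfl
@[simp] lemma ckIndR_inl (x : X) (u : X ⊕ Y) :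
    ckIndR (Sum.inl x : X ⊕ Y) u = 0 := rfl
@[simp] lemma ckIndR_inr (y : Y) (u : X ⊕ Y) :
    ckIndR (Sum.inr y : X ⊕ Y) u = if u = Sum.inr y then 1 else 0 := rfl

/-- alternating step relation -/
def ckStep (eG F : X → Y → ℕ) : X ⊕ Y → X ⊕ Y → Prop := fun u v =>
  match u, v with
  | Sum.inl x, Sum.inr y => F x y < eG x y
  | Sum.inr y, Sum.inl x => 0 < F x y
  | _, _ => False

/-- the augmentation conclusion -/
def ckC (eG F : X → Y → ℕ) (v w : X ⊕ Y) : Prop :=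
  ∃ F' : X → Y → ℕ, (∀ a b, F' a b ≤ eG a b) ∧
    ∀ u, ckDeg F' u + ckIndR v u + ckIndL w u
        = ckDeg F u + ckIndL v u + ckIndR w u

lemma ckC_refl (eG F : X → Y → ℕ) (hF : ∀ a b, F a b ≤ eG a b) (v : X ⊕ Y) :
    ckC eG F v v :=
  ⟨F, hF, fun u => by omega⟩

lemma chain_transfer {α : Type*} {r s : α → α → Prop} :
    ∀ {a : α} {l : List α}, (∀ p q, p ∈ a :: l → q ∈ l → r p q → s p q) →
    List.Chain r a l → List.Chain s a l := by
  intro a l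
  induction l generalizing a with
  | nil => intro _ _; exact List.Chain.nil
  | cons b t ih =>
    intro h hc
    rcases List.chain_cons.mp hc with ⟨hab, ht⟩
    refine List.chain_cons.mpr ⟨h a b (by simp) (by simp) hab, ih ?_ ht⟩
    intro p q hp hq
    exact h p q (by simp at hp ⊢; tauto) (by simp [hq])

lemma ckDeg_add (F : X → Y → ℕ) (x : X) (y : Y) (u : X ⊕ Y) :
    ckDeg (fun a b => if a = x ∧ b = y then F a b + 1 else F a b) u
      = ckDeg F u + (if u = Sum.inl x then 1 else 0)
        + (if u = Sum.inr y then 1 else 0) := by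
  have hpt : ∀ a b, (if a = x ∧ b = y then F a b + 1 else F a b)
      = F a b + (if a = x ∧ b = y then 1 else 0) := by
    intro a b; split <;> simp
  cases u with
  | inl a =>
    simp only [ckDeg, Sum.elim_inl]
    rw [Finset.sum_congr rfl (fun b _ => hpt a b), Finset.sum_add_distrib]
    by_cases ha : a = x
    · subst ha
      simp [Finset.sum_ite_eq']
    · simp [ha]
  | inr b =>
    simp only [ckDeg, Sum.elim_inr]
    rw [Finset.sum_congr rfl (fun a _ => hpt a b), Finset.sum_add_distrib]
    by_cases hb : b = y
    · subst hb
      simp [Finset.sum_ite_eq']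
    · simp [hb]

lemma ckDeg_sub (F : X → Y → ℕ) (x : X) (y : Y) (h : 0 < F x y) (u : X ⊕ Y) :
    ckDeg (fun a b => if a = x ∧ b = y then F a b - 1 else F a b) u
      + (if u = Sum.inl x then 1 else 0) + (if u = Sum.inr y then 1 else 0)
      = ckDeg F u := by
  have hpt : ∀ a b, (if a = x ∧ b = y then F a b - 1 else F a b)
      + (if a = x ∧ b = y then 1 else 0) = F a b := by
    intro a b; split
    · next hc => obtain ⟨rfl, rfl⟩ := hc; omega
    · simp
  cases u with
  | inl a =>
    simp only [ckDeg, Sum.elim_inl]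
    rw [← Finset.sum_congr rfl (fun b (_ : b ∈ Finset.univ) => hpt a b),
      Finset.sum_add_distrib]
    by_cases ha : a = x
    · subst ha
      simp [Finset.sum_ite_eq']
    · simp [ha]
  | inr b =>
    simp only [ckDeg, Sum.elim_inr]
    rw [← Finset.sum_congr rfl (fun a (_ : a ∈ Finset.univ) => hpt a b),
      Finset.sum_add_distrib]
    by_cases hb : b = y
    · subst hb
      simp [Finset.sum_ite_eq']
    · simp [hb]

lemma ckAug_single (eG F : X → Y → ℕ)
    (hF : ∀ a b, F a b ≤ eG a b) {v w : X ⊕ Y} (h : ckStep eG F v w) :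
    ckC eG F v w := by
  match v, w, h with
  | Sum.inl x, Sum.inr y, h =>
    refine ⟨fun a b => if a = x ∧ b = y then F a b + 1 else F a b, ?_, ?_⟩
    · intro a b; dsimp only; split
      · next hc =>
        obtain ⟨rfl, rfl⟩ := hc
        exact h
      · exact hF a b
    · intro u
      have hd := ckDeg_add F x y u
      simp only [ckIndL_inl, ckIndL_inr, ckIndR_inl, ckIndR_inr]
      omega
  | Sum.inr y, Sum.inl x, h =>
    refine ⟨fun a b => if a = x ∧ b = y then F a b - 1 else F a b, ?_, ?_⟩
    · intro a b; dsimp only; split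
      · exact le_trans (Nat.sub_le _ _) (hF a b)
      · exact hF a b
    · intro u
      have hd := ckDeg_sub F x y h u
      simp only [ckIndL_inl, ckIndL_inr, ckIndR_inl, ckIndR_inr]
      omega

lemma ckAug (eG : X → Y → ℕ) :
    ∀ (n : ℕ) (F : X → Y → ℕ), (∀ a b, F a b ≤ eG a b) →
      ∀ (v w : X ⊕ Y) (l : List (X ⊕ Y)), l.length ≤ n →
      List.Chain (ckStep eG F) v (l ++ [w]) → ckC eG F v w := by
  classical
  intro n
  induction n with
  | zero =>
    intro F hF v w l hl hc
    have hnil : l = [] := List.length_eq_zero_iff.mp (Nat.le_zero.mp hl)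
    subst hnil
    simp only [List.nil_append] at hc
    exact ckAug_single eG F hF (List.chain_cons.mp hc).1
  | succ n ih =>
    intro F hF v w l hl hc
    by_cases hvw : v = w
    · subst hvw; exact ckC_refl eG F hF v
    rcases Classical.em (v ∈ l) with hvl | hvl
    · obtain ⟨s, t, rfl⟩ := List.append_of_mem hvl
      have hre : (s ++ v :: t) ++ [w] = s ++ v :: (t ++ [w]) := by simp
      rw [hre] at hc
      have hc' := (List.isChain_cons_split.mp hc).2
      refine ih F hF v w t ?_ hc'
      simp only [List.length_append, List.length_cons] at hl
      omega
    · cases l with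
      | nil =>
        simp only [List.nil_append] at hc
        exact ckAug_single eG F hF (List.chain_cons.mp hc).1
      | cons u rest =>
        have hc' : List.Chain (ckStep eG F) v (u :: (rest ++ [w])) := by
          simpa using hc
        have h1 : ckStep eG F v u := (List.chain_cons.mp hc').1
        have hrest : List.Chain (ckStep eG F) u (rest ++ [w]) :=
          (List.chain_cons.mp hc').2
        have hlen : rest.length ≤ n := by
          simp only [List.length_cons] at hl; omega
        have hnotin : ∀ p, p ∈ u :: (rest ++ [w]) → p ≠ v := by
          intro p hp
          rcases List.mem_cons.mp hp with rfl | hp'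
          · intro hE; rw [hE] at h1
            cases v with
            | inl x => exact h1.elim
            | inr y => exact h1.elim
          · rcases List.mem_append.mp hp' with hp'' | hp''
            · intro hE; subst hE; exact hvl (List.mem_cons_of_mem _ hp'')
            · intro hE; subst hE
              exact hvw (List.mem_singleton.mp hp'')
        match v, u, h1, hc', hrest, hvl, hvw, hnotin with
        | Sum.inl x, Sum.inr y1, h1, hc', hrest, hvl, hvw, hnotin =>
          set F1 : X → Y → ℕ :=
            fun a b => if a = x ∧ b = y1 then F a b + 1 else F a b with hF1def
          have hF1 : ∀ a b, F1 a b ≤ eG a b := by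
            intro a b; rw [hF1def]; dsimp only; split
            · next hcc => obtain ⟨rfl, rfl⟩ := hcc; exact h1
            · exact hF a b
          have hF1eq : ∀ a b, a ≠ x → F1 a b = F a b := by
            intro a b ha; rw [hF1def]; dsimp only
            rw [if_neg (by tauto)]
          have hchain1 : List.Chain (ckStep eG F1) (Sum.inr y1) (rest ++ [w]) := by
            refine chain_transfer ?_ hrest
            intro p q hp hq hs
            have hpv : p ≠ Sum.inl x := hnotin p hp
            have hqv : q ≠ Sum.inl x := hnotin q (List.mem_cons_of_mem _ hq)
            match p, q, hs with
            | Sum.inl a, Sum.inr b, hs =>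
              have : F1 a b = F a b := hF1eq a b (fun hE => hpv (by rw [hE]))
              show F1 a b < eG a b
              rw [this]; exact hs
            | Sum.inr b, Sum.inl a, hs =>
              have : F1 a b = F a b := hF1eq a b (fun hE => hqv (by rw [hE]))
              show 0 < F1 a b
              rw [this]; exact hs
          obtain ⟨F', hF', heq⟩ := ih F1 hF1 (Sum.inr y1) w rest hlen hchain1
          refine ⟨F', hF', fun u' => ?_⟩
          have h2 := heq u'
          have h3 := ckDeg_add F x y1 u'
          rw [← hF1def] at h3
          simp only [ckIndL_inl, ckIndL_inr, ckIndR_inl, ckIndR_inr] at h2 h3 ⊢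
          omega
        | Sum.inr y, Sum.inl x1, h1, hc', hrest, hvl, hvw, hnotin =>
          set F1 : X → Y → ℕ :=
            fun a b => if a = x1 ∧ b = y then F a b - 1 else F a b with hF1def
          have hF1 : ∀ a b, F1 a b ≤ eG a b := by
            intro a b; rw [hF1def]; dsimp only; split
            · exact le_trans (Nat.sub_le _ _) (hF a b)
            · exact hF a b
          have hF1eq : ∀ a b, b ≠ y → F1 a b = F a b := by
            intro a b hb; rw [hF1def]; dsimp only
            rw [if_neg (by tauto)]
          have hchain1 : List.Chain (ckStep eG F1) (Sum.inl x1) (rest ++ [w]) := by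
            refine chain_transfer ?_ hrest
            intro p q hp hq hs
            have hpv : p ≠ Sum.inr y := hnotin p hp
            have hqv : q ≠ Sum.inr y := hnotin q (List.mem_cons_of_mem _ hq)
            match p, q, hs with
            | Sum.inl a, Sum.inr b, hs =>
              have : F1 a b = F a b := hF1eq a b (fun hE => hqv (by rw [hE]))
              show F1 a b < eG a b
              rw [this]; exact hs
            | Sum.inr b, Sum.inl a, hs =>
              have : F1 a b = F a b := hF1eq a b (fun hE => hpv (by rw [hE]))
              show 0 < F1 a b
              rw [this]; exact hs
          obtain ⟨F', hF', heq⟩ := ih F1 hF1 (Sum.inl x1) w rest hlen hchain1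
          refine ⟨F', hF', fun u' => ?_⟩
          have h2 := heq u'
          have h3 := ckDeg_sub F x1 y h1 u'
          rw [← hF1def] at h3
          simp only [ckIndL_inl, ckIndL_inr, ckIndR_inl, ckIndR_inr] at h2 h3 ⊢
          omega

lemma ckPhi_swap (g : X ⊕ Y → ℕ) (F : X → Y → ℕ) :
    ckPhi (fun v => g v.swap) (fun y x => F x y) = ckPhi g F := by
  unfold ckPhi
  refine Fintype.sum_equiv (Equiv.sumComm Y X) _ _ ?_
  intro v
  cases v <;> rfl

lemma ckCore (eG : X → Y → ℕ) (g f : X ⊕ Y → ℕ) (hgf : ∀ v, g v ≤ f v)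
    (F : X → Y → ℕ) (hFle : ∀ a b, F a b ≤ eG a b)
    (hFf : ∀ v, ckDeg F v ≤ f v)
    (hmax : ∀ F₂ : X → Y → ℕ, (∀ a b, F₂ a b ≤ eG a b) →
      (∀ v, ckDeg F₂ v ≤ f v) → ckPhi g F₂ ≤ ckPhi g F)
    (x0 : X) (hx0 : ckDeg F (Sum.inl x0) < g (Sum.inl x0))
    (hcond : ∀ A : Finset X,
      ∑ x ∈ A, g (Sum.inl x) ≤ ∑ y, min (f (Sum.inr y)) (∑ x ∈ A, eG x y)) :
    False := by
  classical
  set R : X ⊕ Y → Prop := Relation.ReflTransGen (ckStep eG F) (Sum.inl x0) with hR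
  have hkey : ∀ w, R w → ckC eG F (Sum.inl x0) w := by
    intro w hw
    obtain ⟨l, hchain, hlast⟩ := List.exists_isChain_cons_of_relationReflTransGen hw
    cases l with
    | nil =>
      have : Sum.inl x0 = w := by simpa using hlast
      subst this
      exact ckC_refl eG F hFle _
    | cons a t =>
      have hne : (a :: t) ≠ [] := by simp
      have hw' : (a :: t).getLast hne = w := by
        rw [List.getLast_cons hne] at hlast; exact hlast
      have hdl : (a :: t).dropLast ++ [(a :: t).getLast hne] = (a :: t) :=
        List.dropLast_append_getLast hne
      rw [← hdl, hw'] at hchain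
      exact ckAug eG ((a :: t).dropLast).length F hFle (Sum.inl x0) w _ le_rfl hchain
  have hgfx0 := hgf (Sum.inl x0)
  have fact1 : ∀ y, R (Sum.inr y) → ckDeg F (Sum.inr y) = f (Sum.inr y) := by
    intro y hy
    by_contra hne
    have hlt : ckDeg F (Sum.inr y) < f (Sum.inr y) := lt_of_le_of_ne (hFf _) hne
    obtain ⟨F', hF'le, heq⟩ := hkey _ hy
    have hdeg : ∀ u, ckDeg F' u = ckDeg F u + (if u = Sum.inl x0 then 1 else 0)
        + (if u = Sum.inr y then 1 else 0) := by
      intro u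
      have := heq u
      simp only [ckIndL_inl, ckIndL_inr, ckIndR_inl, ckIndR_inr] at this
      omega
    have hF'f : ∀ v, ckDeg F' v ≤ f v := by
      intro v
      rw [hdeg v]
      by_cases h1 : v = Sum.inl x0
      · subst h1; simp; omega
      · by_cases h2 : v = Sum.inr y
        · subst h2; simp [h1]; omega
        · simp only [h1, h2, if_false]
          have := hFf v; omega
    have hphi : ckPhi g F < ckPhi g F' := by
      refine Finset.sum_lt_sum (fun v _ => ?_) ⟨Sum.inl x0, Finset.mem_univ _, ?_⟩
      · rw [hdeg v]; omega
      · rw [hdeg (Sum.inl x0)]; simp; omega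
    exact absurd (hmax F' hF'le hF'f) (not_le.mpr hphi)
  have fact2 : ∀ x, R (Sum.inl x) → ckDeg F (Sum.inl x) ≤ g (Sum.inl x) := by
    intro x hx
    by_cases hxx : x = x0
    · subst hxx; exact le_of_lt hx0
    by_contra hgt
    push_neg at hgt
    obtain ⟨F', hF'le, heq⟩ := hkey _ hx
    have hdeg : ∀ u, ckDeg F' u + (if u = Sum.inl x then 1 else 0)
        = ckDeg F u + (if u = Sum.inl x0 then 1 else 0) := by
      intro u
      have := heq u
      simp only [ckIndL_inl, ckIndL_inr, ckIndR_inl, ckIndR_inr] at this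
      omega
    have hxne : (Sum.inl x0 : X ⊕ Y) ≠ Sum.inl x := by
      simp [Ne, eq_comm]; exact fun h => hxx h.symm
    have hF'f : ∀ v, ckDeg F' v ≤ f v := by
      intro v
      have hd := hdeg v
      by_cases h1 : v = Sum.inl x0
      · subst h1
        rw [if_neg hxne, if_pos rfl] at hd
        omega
      · by_cases h2 : v = Sum.inl x
        · subst h2
          rw [if_pos rfl, if_neg h1] at hd
          have := hFf (Sum.inl x); omega
        · rw [if_neg h2, if_neg h1] at hd
          have := hFf v; omega
    have hphi : ckPhi g F < ckPhi g F' := by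
      refine Finset.sum_lt_sum (fun v _ => ?_) ⟨Sum.inl x0, Finset.mem_univ _, ?_⟩
      · have hd := hdeg v
        by_cases h2 : v = Sum.inl x
        · subst h2
          rw [if_pos rfl] at hd
          omega
        · rw [if_neg h2] at hd
          omega
      · have hd := hdeg (Sum.inl x0)
        rw [if_neg hxne, if_pos rfl] at hd
        omega
    exact absurd (hmax F' hF'le hF'f) (not_le.mpr hphi)
  have fact3 : ∀ x y, R (Sum.inl x) → ¬ R (Sum.inr y) → F x y = eG x y := by
    intro x y hx hy
    by_contra hne
    exact hy (hx.tail (show ckStep eG F (Sum.inl x) (Sum.inr y) from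
      lt_of_le_of_ne (hFle x y) hne))
  have fact4 : ∀ x y, R (Sum.inr y) → ¬ R (Sum.inl x) → F x y = 0 := by
    intro x y hy hx
    by_contra hne
    exact hx (hy.tail (show ckStep eG F (Sum.inr y) (Sum.inl x) from
      Nat.pos_of_ne_zero hne))
  set A : Finset X := Finset.univ.filter (fun x => R (Sum.inl x)) with hA
  have hmemA : ∀ x, x ∈ A ↔ R (Sum.inl x) := by
    intro x; simp [hA]
  have hx0A : x0 ∈ A := (hmemA x0).mpr Relation.ReflTransGen.refl
  have hstep2 : ∀ y, min (f (Sum.inr y)) (∑ x ∈ A, eG x y) ≤ ∑ x ∈ A, F x y := by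
    intro y
    by_cases hy : R (Sum.inr y)
    · have h1 : ∑ x ∈ A, F x y = ∑ x, F x y := by
        refine Finset.sum_subset (Finset.subset_univ A) ?_
        intro x _ hxA
        exact fact4 x y hy (fun hc => hxA ((hmemA x).mpr hc))
      have h2 : (∑ x, F x y) = ckDeg F (Sum.inr y) := rfl
      calc min (f (Sum.inr y)) (∑ x ∈ A, eG x y) ≤ f (Sum.inr y) := min_le_left _ _
        _ = ckDeg F (Sum.inr y) := (fact1 y hy).symm
        _ = ∑ x ∈ A, F x y := by rw [← h2, h1]
    · have h1 : ∑ x ∈ A, eG x y = ∑ x ∈ A, F x y :=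
        Finset.sum_congr rfl (fun x hx => (fact3 x y ((hmemA x).mp hx) hy).symm)
      calc min (f (Sum.inr y)) (∑ x ∈ A, eG x y) ≤ ∑ x ∈ A, eG x y := min_le_right _ _
        _ = ∑ x ∈ A, F x y := h1
  have hlt : ∑ x ∈ A, ckDeg F (Sum.inl x) < ∑ x ∈ A, g (Sum.inl x) :=
    Finset.sum_lt_sum (fun x hx => fact2 x ((hmemA x).mp hx)) ⟨x0, hx0A, hx0⟩
  have hswap : ∑ y, ∑ x ∈ A, F x y = ∑ x ∈ A, ckDeg F (Sum.inl x) := by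
    rw [Finset.sum_comm]; rfl
  have hc := hcond A
  have h2 : ∑ y, min (f (Sum.inr y)) (∑ x ∈ A, eG x y) ≤ ∑ y, ∑ x ∈ A, F x y :=
    Finset.sum_le_sum (fun y _ => hstep2 y)
  omega

end CK

/-- Theorem 2 (Cymer–Kano): a bipartite multigraph `G[X,Y]` has a
`(g,f)`-factor iff for every `A ⊆ X`,
`∑_{x∈A} g(x) ≤ ∑_{y∈Y} min{f(y), e_G(y,A)}`, and for every `B ⊆ Y`,
`∑_{y∈B} g(y) ≤ ∑_{x∈X} min{f(x), e_G(x,B)}`. -/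
theorem bipartite_gf_factor_cymer_kano
    {X Y : Type*} [Fintype X] [Fintype Y] [DecidableEq X] [DecidableEq Y]
    (eG : X → Y → ℕ) (g f : X ⊕ Y → ℕ)
    (hgf : ∀ v : X ⊕ Y, g v ≤ f v) :
    (∃ eF : X → Y → ℕ,
      (∀ x y, eF x y ≤ eG x y) ∧
      (∀ x : X, g (Sum.inl x) ≤ ∑ y, eF x y ∧ ∑ y, eF x y ≤ f (Sum.inl x)) ∧
      (∀ y : Y, g (Sum.inr y) ≤ ∑ x, eF x y ∧ ∑ x, eF x y ≤ f (Sum.inr y)))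
    ↔
    ((∀ A : Finset X,
        ∑ x ∈ A, g (Sum.inl x) ≤
          ∑ y : Y, min (f (Sum.inr y)) (∑ x ∈ A, eG x y)) ∧
     (∀ B : Finset Y,
        ∑ y ∈ B, g (Sum.inr y) ≤
          ∑ x : X, min (f (Sum.inl x)) (∑ y ∈ B, eG x y))) := by
  constructor
  · rintro ⟨eF, hle, hX, hY⟩
    constructor
    · intro A
      calc ∑ x ∈ A, g (Sum.inl x) ≤ ∑ x ∈ A, ∑ y, eF x y :=
            Finset.sum_le_sum (fun x _ => (hX x).1)
        _ = ∑ y, ∑ x ∈ A, eF x y := Finset.sum_comm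
        _ ≤ ∑ y : Y, min (f (Sum.inr y)) (∑ x ∈ A, eG x y) := by
            refine Finset.sum_le_sum (fun y _ => le_min ?_ ?_)
            · calc ∑ x ∈ A, eF x y ≤ ∑ x, eF x y :=
                  Finset.sum_le_sum_of_subset (Finset.subset_univ A)
                _ ≤ f (Sum.inr y) := (hY y).2
            · exact Finset.sum_le_sum (fun x _ => hle x y)
    · intro B
      calc ∑ y ∈ B, g (Sum.inr y) ≤ ∑ y ∈ B, ∑ x, eF x y :=
            Finset.sum_le_sum (fun y _ => (hY y).1)
        _ = ∑ x : X, ∑ y ∈ B, eF x y := Finset.sum_comm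
        _ ≤ ∑ x : X, min (f (Sum.inl x)) (∑ y ∈ B, eG x y) := by
            refine Finset.sum_le_sum (fun x _ => le_min ?_ ?_)
            · calc ∑ y ∈ B, eF x y ≤ ∑ y, eF x y :=
                  Finset.sum_le_sum_of_subset (Finset.subset_univ B)
                _ ≤ f (Sum.inl x) := (hX x).2
            · exact Finset.sum_le_sum (fun y _ => hle x y)
  · rintro ⟨h1, h2⟩
    classical
    set P : ℕ → Prop := fun n => ∃ F : X → Y → ℕ,
      (∀ a b, F a b ≤ eG a b) ∧ (∀ v, ckDeg F v ≤ f v) ∧ ckPhi g F = n with hP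
    have hB : ∀ F : X → Y → ℕ, ckPhi g F ≤ ∑ v : X ⊕ Y, g v :=
      fun F => Finset.sum_le_sum (fun v _ => min_le_right _ _)
    have hP0 : P 0 := by
      refine ⟨fun _ _ => 0, fun _ _ => Nat.zero_le _, ?_, ?_⟩
      · intro v; cases v <;> simp [ckDeg]
      · have : ∀ v : X ⊕ Y, min (ckDeg (fun (_ : X) (_ : Y) => 0) v) (g v) = 0 := by
          intro v; cases v <;> simp [ckDeg]
        simp [ckPhi, this]
    obtain ⟨F, hFle, hFf, hFPhi⟩ :=
      Nat.findGreatest_spec (P := P) (Nat.zero_le (∑ v : X ⊕ Y, g v)) hP0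
    have hmax : ∀ F₂ : X → Y → ℕ, (∀ a b, F₂ a b ≤ eG a b) →
        (∀ v, ckDeg F₂ v ≤ f v) → ckPhi g F₂ ≤ ckPhi g F := by
      intro F₂ h₂le h₂f
      rw [hFPhi]
      exact Nat.le_findGreatest (hB F₂) ⟨F₂, h₂le, h₂f, rfl⟩
    have hg : ∀ v, g v ≤ ckDeg F v := by
      by_contra hcon
      push_neg at hcon
      obtain ⟨v, hv⟩ := hcon
      cases v with
      | inl x0 => exact ckCore eG g f hgf F hFle hFf hmax x0 hv h1
      | inr y0 =>
        refine ckCore (fun y x => eG x y) (fun v => g v.swap) (fun v => f v.swap)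
          (fun v => hgf v.swap) (fun y x => F x y) (fun b a => hFle a b)
          ?_ ?_ y0 ?_ ?_
        · intro v
          cases v with
          | inl y => exact hFf (Sum.inr y)
          | inr x => exact hFf (Sum.inl x)
        · intro F₂ h₂le h₂f
          have he1 : ckPhi (fun v => g v.swap) F₂ = ckPhi g (fun x y => F₂ y x) :=
            ckPhi_swap g (fun x y => F₂ y x)
          have he2 : ckPhi (fun v => g v.swap) (fun y x => F x y) = ckPhi g F :=
            ckPhi_swap g F
          rw [he1, he2]
          refine hmax (fun x y => F₂ y x) (fun a b => h₂le b a) ?_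
          intro v
          cases v with
          | inl x => exact h₂f (Sum.inr x)
          | inr y => exact h₂f (Sum.inl y)
        · exact hv
        · exact h2
    exact ⟨F, hFle, fun x => ⟨hg (Sum.inl x), hFf (Sum.inl x)⟩,
      fun y => ⟨hg (Sum.inr y), hFf (Sum.inr y)⟩⟩
end

section
/- Let m ≥ 1 and let G[X,Y] be a bipartite multigraph on finite disjoint vertex sets X and Y in which every edge has multiplicity at least m (for all x, y, either e_G(x,y) = 0 or e_G(x,y) ≥ m). Let g assign natural numbers to X, let f assign natural numbers to Y with f(y) ≤ m for all y ∈ Y, and suppose ∑_{y∈N_G(S)} f(y) ≥ ∑_{x∈S} g(x) for every S ⊆ X. Then for every A ⊆ X and B ⊆ Y, setting S := {x ∈ A : g(x) ≥ e_G(x, Y∖B)}, one has ∑_{x∈S} g(x) ≤ ∑_{y∈B} f(y) + e_G(S, Y∖B), where e_G(S, Y∖B) := ∑_{x∈S} ∑_{y∈Y∖B} e_G(x,y). -/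
/-!
Put `S := {x ∈ A : e_G(x, Y∖B) ≤ g(x)}` and apply the Hall condition to `S`. The neighbours of `S`
inside `B` contribute at most `f(B)`; each neighbour `y ∉ B` has `f(y) ≤ m ≤ e_G(x, y)` for some
`x ∈ S`, so those contribute at most `e_G(S, Y∖B)`. Hence the bound holds for every `S ⊆ X`.
-/

open Finset

namespace BipartiteMultigraph

variable {X Y : Type*} [Fintype Y]

def neighborFinset (eG : X → Y → ℕ) (S : Finset X) : Finset Y :=
  univ.filter fun y => ∃ x ∈ S, 0 < eG x y

theorem le_sum_of_mem_neighborFinset {m : ℕ} {eG : X → Y → ℕ}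
    (hmult : ∀ x y, eG x y = 0 ∨ m ≤ eG x y) {S : Finset X} {y : Y} {a : ℕ} (ha : a ≤ m)
    (hy : y ∈ neighborFinset eG S) : a ≤ ∑ x ∈ S, eG x y := by
  obtain ⟨x, hxS, hxy⟩ := (mem_filter.mp hy).2
  calc a ≤ m := ha
    _ ≤ eG x y := (hmult x y).resolve_left hxy.ne'
    _ ≤ ∑ x ∈ S, eG x y := single_le_sum (f := (eG · y)) (fun _ _ => Nat.zero_le _) hxS

theorem sum_neighborFinset_le [DecidableEq Y] {m : ℕ} {eG : X → Y → ℕ}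
    (hmult : ∀ x y, eG x y = 0 ∨ m ≤ eG x y) {f : Y → ℕ} (hfm : ∀ y, f y ≤ m)
    (S : Finset X) (B : Finset Y) :
    ∑ y ∈ neighborFinset eG S, f y ≤ ∑ y ∈ B, f y + ∑ x ∈ S, ∑ y ∈ Bᶜ, eG x y := by
  set N := neighborFinset eG S
  rw [← sum_filter_add_sum_filter_not N (· ∈ B), sum_comm (s := S)]
  gcongr
  · exact fun y hy => (mem_filter.mp hy).2
  · calc ∑ y ∈ N.filter (· ∉ B), f y
        ≤ ∑ y ∈ N.filter (· ∉ B), ∑ x ∈ S, eG x y :=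
          sum_le_sum fun y hy => le_sum_of_mem_neighborFinset hmult (hfm y) (mem_filter.mp hy).1
      _ ≤ ∑ y ∈ Bᶜ, ∑ x ∈ S, eG x y :=
          sum_le_sum_of_subset fun y hy => mem_compl.mpr (mem_filter.mp hy).2

end BipartiteMultigraph

open BipartiteMultigraph in
theorem hall_condition_key_inequality_general
    {X Y : Type*} [Fintype Y] [DecidableEq Y]
    (m : ℕ) (eG : X → Y → ℕ)
    (hmult : ∀ x y, eG x y = 0 ∨ m ≤ eG x y)
    (g : X → ℕ) (f : Y → ℕ)
    (hfm : ∀ y : Y, f y ≤ m)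
    (hhall : ∀ S : Finset X,
      ∑ x ∈ S, g x ≤
        ∑ y ∈ Finset.univ.filter (fun y : Y => ∃ x ∈ S, 0 < eG x y), f y) :
    ∀ (A : Finset X) (B : Finset Y),
      ∑ x ∈ A.filter (fun x => ∑ y ∈ Bᶜ, eG x y ≤ g x), g x ≤
        ∑ y ∈ B, f y +
          ∑ x ∈ A.filter (fun x => ∑ y ∈ Bᶜ, eG x y ≤ g x), ∑ y ∈ Bᶜ, eG x y :=
  fun _ B => (hhall _).trans (sum_neighborFinset_le hmult hfm _ B)

/-- The key inequality in the proof of Corollary 4: under the Hall-type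
condition, for all `A ⊆ X`, `B ⊆ Y`, with `S = {x ∈ A : g(x) ≥ e_G(x, Y∖B)}`,
one has `g(S) ≤ f(B) + e_G(S, Y∖B)`. -/
theorem hall_condition_key_inequality
    {X Y : Type*} [Fintype X] [Fintype Y] [DecidableEq X] [DecidableEq Y]
    (m : ℕ) (hm : 1 ≤ m) (eG : X → Y → ℕ)
    (hmult : ∀ x y, eG x y = 0 ∨ m ≤ eG x y)
    (g : X → ℕ) (f : Y → ℕ)
    (hfm : ∀ y : Y, f y ≤ m)
    (hhall : ∀ S : Finset X,
      ∑ x ∈ S, g x ≤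
        ∑ y ∈ Finset.univ.filter (fun y : Y => ∃ x ∈ S, 0 < eG x y), f y) :
    ∀ (A : Finset X) (B : Finset Y),
      ∑ x ∈ A.filter (fun x => ∑ y ∈ Bᶜ, eG x y ≤ g x), g x ≤
        ∑ y ∈ B, f y +
          ∑ x ∈ A.filter (fun x => ∑ y ∈ Bᶜ, eG x y ≤ g x), ∑ y ∈ Bᶜ, eG x y :=
  hall_condition_key_inequality_general m eG hmult g f hfm hhall
end
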